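/- Let Γ be any collection of D-formulas and let G be a G-formula. Then Γ ⊢_C G if and only if G⊃⊥, Γ ⊢_I G. -/
import Mathlib


set_option maxHeartbeats 1000000

/-- Terms of a first-order language: variables (de Bruijn indices for
quantified variables) and constants. -/
inductive Tm : Type
  | var : ℕ → Tm
  | const : ℕ → Tm

namespace Tm

/-- Substitution of the term `u` for the variable with index `k`. -/
def subst (k : ℕ) (u : Tm) : Tm → Tm
  | var n => if n = k then u else var n
  | const c => const c

/-- The constant `c` occurs in a term. -/
def constIn (c : ℕ) : Tm → Prop
  | var _ => False
  | const d => d = c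

end Tm

/-- First-order formulas over the primitives ⊤, ⊥, ∧, ∨, ⊃, ∃, ∀.
Quantifiers are represented with de Bruijn indices. -/
inductive Fm : Type
  | top : Fm
  | bot : Fm
  | atom : ℕ → List Tm → Fm
  | conj : Fm → Fm → Fm
  | disj : Fm → Fm → Fm
  | imp : Fm → Fm → Fm
  | ex : Fm → Fm
  | all : Fm → Fm

namespace Fm

/-- Substitution of a term for the variable with de Bruijn index `k`. -/
def subst (k : ℕ) (u : Tm) : Fm → Fm
  | top => top
  | bot => bot
  | atom p ts => atom p (ts.map (Tm.subst k u))
  | conj a b => conj (subst k u a) (subst k u b)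
  | disj a b => disj (subst k u a) (subst k u b)
  | imp a b => imp (subst k u a) (subst k u b)
  | ex a => ex (subst (k + 1) u a)
  | all a => all (subst (k + 1) u a)

/-- `[t/x]B`: instantiation of the outermost bound variable of the body of a
quantified formula with the term `u`. -/
def inst (u : Tm) (a : Fm) : Fm := subst 0 u a

/-- Atomic formulas (⊤ and ⊥ are *not* atomic). -/
def isAtom : Fm → Prop
  | atom _ _ => True
  | _ => False

/-- Formulas that need no right-introduction rule in a uniform/O_G proof:
atomic formulas and ⊥. -/
def neutral (F : Fm) : Prop := F.isAtom ∨ F = bot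

/-- The constant `c` occurs in a formula. -/
def constIn (c : ℕ) : Fm → Prop
  | top => False
  | bot => False
  | atom _ ts => ∃ t ∈ ts, t.constIn c
  | conj a b => constIn c a ∨ constIn c b
  | disj a b => constIn c a ∨ constIn c b
  | imp a b => constIn c a ∨ constIn c b
  | ex a => constIn c a
  | all a => constIn c a

end Fm

/-- The eigenvariable (constant) `c` does not occur in the sequent `Γ → Δ`. -/
def FreshSeq (c : ℕ) (Γ Δ : Multiset Fm) : Prop :=
  (∀ F ∈ Γ, ¬ F.constIn c) ∧ ∀ F ∈ Δ, ¬ F.constIn c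

/-- The sequent `Γ → Δ` is an axiom: ⊤ ∈ Δ, or some `A` that is ⊥ or atomic
belongs to both `Γ` and `Δ`. -/
def AxSeq (Γ Δ : Multiset Fm) : Prop :=
  Fm.top ∈ Δ ∨ ∃ A : Fm, (A = Fm.bot ∨ A.isAtom) ∧ A ∈ Γ ∧ A ∈ Δ

/-- C-proofs: arbitrary derivations in the sequent calculus of the paper.
Sequents are pairs of multisets of formulas. -/
inductive CProof : Multiset Fm → Multiset Fm → Type
  | ax {Γ Δ : Multiset Fm} (h : AxSeq Γ Δ) : CProof Γ Δ
  | contrL {B : Fm} {Γ Δ : Multiset Fm} (p : CProof (B ::ₘ B ::ₘ Γ) Δ) : CProof (B ::ₘ Γ) Δ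
  | contrR {B : Fm} {Γ Δ : Multiset Fm} (p : CProof Γ (B ::ₘ B ::ₘ Δ)) : CProof Γ (B ::ₘ Δ)
  | botR {D : Fm} {Γ Δ : Multiset Fm} (p : CProof Γ (Fm.bot ::ₘ Δ)) : CProof Γ (D ::ₘ Δ)
  | andL {B D : Fm} {Γ Δ : Multiset Fm} (p : CProof (B ::ₘ D ::ₘ (B.conj D) ::ₘ Γ) Δ) :
      CProof ((B.conj D) ::ₘ Γ) Δ
  | andR {B D : Fm} {Γ Δ : Multiset Fm} (p : CProof Γ (B ::ₘ Δ)) (q : CProof Γ (D ::ₘ Δ)) :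
      CProof Γ ((B.conj D) ::ₘ Δ)
  | orL {B D : Fm} {Γ Δ : Multiset Fm} (p : CProof (B ::ₘ Γ) Δ) (q : CProof (D ::ₘ Γ) Δ) :
      CProof ((B.disj D) ::ₘ Γ) Δ
  | orR1 {B D : Fm} {Γ Δ : Multiset Fm} (p : CProof Γ (B ::ₘ Δ)) : CProof Γ ((B.disj D) ::ₘ Δ)
  | orR2 {B D : Fm} {Γ Δ : Multiset Fm} (p : CProof Γ (D ::ₘ Δ)) : CProof Γ ((B.disj D) ::ₘ Δ)
  | impL {B D : Fm} {Γ Δ Θ : Multiset Fm} (p : CProof ((B.imp D) ::ₘ Γ) (B ::ₘ Δ))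
      (q : CProof (D ::ₘ Γ) Θ) : CProof ((B.imp D) ::ₘ Γ) (Δ + Θ)
  | impR {B D : Fm} {Γ Δ : Multiset Fm} (p : CProof (B ::ₘ Γ) (D ::ₘ Δ)) :
      CProof Γ ((B.imp D) ::ₘ Δ)
  | allL {B : Fm} {Γ Δ : Multiset Fm} (t : Tm)
      (p : CProof ((B.inst t) ::ₘ (Fm.all B) ::ₘ Γ) Δ) : CProof ((Fm.all B) ::ₘ Γ) Δ
  | exR {B : Fm} {Γ Δ : Multiset Fm} (t : Tm) (p : CProof Γ ((B.inst t) ::ₘ Δ)) :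
      CProof Γ ((Fm.ex B) ::ₘ Δ)
  | exL {B : Fm} {Γ Δ : Multiset Fm} (c : ℕ) (hc : FreshSeq c ((Fm.ex B) ::ₘ Γ) Δ)
      (p : CProof ((B.inst (Tm.const c)) ::ₘ Γ) Δ) : CProof ((Fm.ex B) ::ₘ Γ) Δ
  | allR {B : Fm} {Γ Δ : Multiset Fm} (c : ℕ) (hc : FreshSeq c Γ ((Fm.all B) ::ₘ Δ))
      (p : CProof Γ ((B.inst (Tm.const c)) ::ₘ Δ)) : CProof Γ ((Fm.all B) ::ₘ Δ)

namespace CProof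

/-- An I-proof is a C-proof in which every sequent has exactly one formula in
its succedent. -/
def isI : ∀ (Γ Δ : Multiset Fm), CProof Γ Δ → Prop
  | _, _, @ax _ Δ _ => Multiset.card Δ = 1
  | _, _, @contrL _ _ Δ p => Multiset.card Δ = 1 ∧ isI _ _ p
  | _, _, @contrR B _ Δ p => Multiset.card (B ::ₘ Δ) = 1 ∧ isI _ _ p
  | _, _, @botR D _ Δ p => Multiset.card (D ::ₘ Δ) = 1 ∧ isI _ _ p
  | _, _, @andL _ _ _ Δ p => Multiset.card Δ = 1 ∧ isI _ _ p
  | _, _, @andR B D _ Δ p q => Multiset.card ((B.conj D) ::ₘ Δ) = 1 ∧ isI _ _ p ∧ isI _ _ q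
  | _, _, @orL _ _ _ Δ p q => Multiset.card Δ = 1 ∧ isI _ _ p ∧ isI _ _ q
  | _, _, @orR1 B D _ Δ p => Multiset.card ((B.disj D) ::ₘ Δ) = 1 ∧ isI _ _ p
  | _, _, @orR2 B D _ Δ p => Multiset.card ((B.disj D) ::ₘ Δ) = 1 ∧ isI _ _ p
  | _, _, @impL _ _ _ Δ Θ p q => Multiset.card (Δ + Θ) = 1 ∧ isI _ _ p ∧ isI _ _ q
  | _, _, @impR B D _ Δ p => Multiset.card ((B.imp D) ::ₘ Δ) = 1 ∧ isI _ _ p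
  | _, _, @allL _ _ Δ _ p => Multiset.card Δ = 1 ∧ isI _ _ p
  | _, _, @exR B _ Δ _ p => Multiset.card ((Fm.ex B) ::ₘ Δ) = 1 ∧ isI _ _ p
  | _, _, @exL _ _ Δ _ _ p => Multiset.card Δ = 1 ∧ isI _ _ p
  | _, _, @allR B _ Δ _ _ p => Multiset.card ((Fm.all B) ::ₘ Δ) = 1 ∧ isI _ _ p

end CProof

/-- Classical provability: `Γ ⊢_C F`. -/
def CProv (Γ : Multiset Fm) (F : Fm) : Prop := Nonempty (CProof Γ ({F} : Multiset Fm))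

/-- Intuitionistic provability: `Γ ⊢_I F`. -/
def IProv (Γ : Multiset Fm) (F : Fm) : Prop := ∃ p : CProof Γ ({F} : Multiset Fm), p.isI

namespace CProof

open Classical in
/-- The nonconstructiveness measure of a C-proof: the number of
nonconstructive occurrences of ∨-L and ⊃-R rules in it. -/
noncomputable def mu : ∀ (Γ Δ : Multiset Fm), CProof Γ Δ → ℕ
  | _, _, ax _ => 0
  | _, _, contrL p => mu _ _ p
  | _, _, contrR p => mu _ _ p
  | _, _, botR p => mu _ _ p
  | _, _, andL p => mu _ _ p
  | _, _, andR p q => mu _ _ p + mu _ _ q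
  | _, _, @orL B D Γ Δ p q =>
      mu _ _ p + mu _ _ q +
        (if ∃ F ∈ Δ, IProv (B ::ₘ Γ) F ∧ IProv (D ::ₘ Γ) F then 0 else 1)
  | _, _, orR1 p => mu _ _ p
  | _, _, orR2 p => mu _ _ p
  | _, _, impL p q => mu _ _ p + mu _ _ q
  | _, _, @impR B D Γ _ p => mu _ _ p + (if IProv (B ::ₘ Γ) D then 0 else 1)
  | _, _, allL _ p => mu _ _ p
  | _, _, exR _ p => mu _ _ p
  | _, _, exL _ _ p => mu _ _ p
  | _, _, allR _ _ p => mu _ _ p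

/-- The sequent `S → P` appears in the given C-proof. -/
def occursSeq : ∀ (Γ Δ : Multiset Fm), CProof Γ Δ → Multiset Fm → Multiset Fm → Prop
  | _, _, @ax Γ Δ _, S, P => Γ = S ∧ Δ = P
  | _, _, @contrL B Γ Δ p, S, P => ((B ::ₘ Γ) = S ∧ Δ = P) ∨ occursSeq _ _ p S P
  | _, _, @contrR B Γ Δ p, S, P => (Γ = S ∧ (B ::ₘ Δ) = P) ∨ occursSeq _ _ p S P
  | _, _, @botR D Γ Δ p, S, P => (Γ = S ∧ (D ::ₘ Δ) = P) ∨ occursSeq _ _ p S P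
  | _, _, @andL B D Γ Δ p, S, P => (((B.conj D) ::ₘ Γ) = S ∧ Δ = P) ∨ occursSeq _ _ p S P
  | _, _, @andR B D Γ Δ p q, S, P =>
      (Γ = S ∧ ((B.conj D) ::ₘ Δ) = P) ∨ occursSeq _ _ p S P ∨ occursSeq _ _ q S P
  | _, _, @orL B D Γ Δ p q, S, P =>
      (((B.disj D) ::ₘ Γ) = S ∧ Δ = P) ∨ occursSeq _ _ p S P ∨ occursSeq _ _ q S P
  | _, _, @orR1 B D Γ Δ p, S, P => (Γ = S ∧ ((B.disj D) ::ₘ Δ) = P) ∨ occursSeq _ _ p S P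
  | _, _, @orR2 B D Γ Δ p, S, P => (Γ = S ∧ ((B.disj D) ::ₘ Δ) = P) ∨ occursSeq _ _ p S P
  | _, _, @impL B D Γ Δ Θ p q, S, P =>
      (((B.imp D) ::ₘ Γ) = S ∧ (Δ + Θ) = P) ∨ occursSeq _ _ p S P ∨ occursSeq _ _ q S P
  | _, _, @impR B D Γ Δ p, S, P => (Γ = S ∧ ((B.imp D) ::ₘ Δ) = P) ∨ occursSeq _ _ p S P
  | _, _, @allL B Γ Δ _ p, S, P => (((Fm.all B) ::ₘ Γ) = S ∧ Δ = P) ∨ occursSeq _ _ p S P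
  | _, _, @exR B Γ Δ _ p, S, P => (Γ = S ∧ ((Fm.ex B) ::ₘ Δ) = P) ∨ occursSeq _ _ p S P
  | _, _, @exL B Γ Δ _ _ p, S, P => (((Fm.ex B) ::ₘ Γ) = S ∧ Δ = P) ∨ occursSeq _ _ p S P
  | _, _, @allR B Γ Δ _ _ p, S, P => (Γ = S ∧ ((Fm.all B) ::ₘ Δ) = P) ∨ occursSeq _ _ p S P

/-- `hasImpR p B S P D` holds when an ⊃-R rule with upper sequent
`B,S → P,D` and lower sequent `S → P,B⊃D` occurs in the proof `p`. -/
def hasImpR : ∀ (Γ Δ : Multiset Fm), CProof Γ Δ → Fm → Multiset Fm → Multiset Fm → Fm → Prop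
  | _, _, ax _, _, _, _, _ => False
  | _, _, contrL p, B, S, P, D => hasImpR _ _ p B S P D
  | _, _, contrR p, B, S, P, D => hasImpR _ _ p B S P D
  | _, _, botR p, B, S, P, D => hasImpR _ _ p B S P D
  | _, _, andL p, B, S, P, D => hasImpR _ _ p B S P D
  | _, _, andR p q, B, S, P, D => hasImpR _ _ p B S P D ∨ hasImpR _ _ q B S P D
  | _, _, orL p q, B, S, P, D => hasImpR _ _ p B S P D ∨ hasImpR _ _ q B S P D
  | _, _, orR1 p, B, S, P, D => hasImpR _ _ p B S P D
  | _, _, orR2 p, B, S, P, D => hasImpR _ _ p B S P D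
  | _, _, impL p q, B, S, P, D => hasImpR _ _ p B S P D ∨ hasImpR _ _ q B S P D
  | _, _, @impR B' D' Γ' Δ' p, B, S, P, D =>
      (B' = B ∧ Γ' = S ∧ Δ' = P ∧ D' = D) ∨ hasImpR _ _ p B S P D
  | _, _, allL _ p, B, S, P, D => hasImpR _ _ p B S P D
  | _, _, exR _ p, B, S, P, D => hasImpR _ _ p B S P D
  | _, _, exL _ _ p, B, S, P, D => hasImpR _ _ p B S P D
  | _, _, allR _ _ p, B, S, P, D => hasImpR _ _ p B S P D

/-- `hasOrL p B D S P` holds when an ∨-L rule with upper sequents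
`B,S → P` and `D,S → P` and lower sequent `B∨D,S → P` occurs in `p`. -/
def hasOrL : ∀ (Γ Δ : Multiset Fm), CProof Γ Δ → Fm → Fm → Multiset Fm → Multiset Fm → Prop
  | _, _, ax _, _, _, _, _ => False
  | _, _, contrL p, B, D, S, P => hasOrL _ _ p B D S P
  | _, _, contrR p, B, D, S, P => hasOrL _ _ p B D S P
  | _, _, botR p, B, D, S, P => hasOrL _ _ p B D S P
  | _, _, andL p, B, D, S, P => hasOrL _ _ p B D S P
  | _, _, andR p q, B, D, S, P => hasOrL _ _ p B D S P ∨ hasOrL _ _ q B D S P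
  | _, _, @orL B' D' Γ' Δ' p q, B, D, S, P =>
      (B' = B ∧ D' = D ∧ Γ' = S ∧ Δ' = P) ∨ hasOrL _ _ p B D S P ∨ hasOrL _ _ q B D S P
  | _, _, orR1 p, B, D, S, P => hasOrL _ _ p B D S P
  | _, _, orR2 p, B, D, S, P => hasOrL _ _ p B D S P
  | _, _, impL p q, B, D, S, P => hasOrL _ _ p B D S P ∨ hasOrL _ _ q B D S P
  | _, _, impR p, B, D, S, P => hasOrL _ _ p B D S P
  | _, _, allL _ p, B, D, S, P => hasOrL _ _ p B D S P
  | _, _, exR _ p, B, D, S, P => hasOrL _ _ p B D S P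
  | _, _, exL _ _ p, B, D, S, P => hasOrL _ _ p B D S P
  | _, _, allR _ _ p, B, D, S, P => hasOrL _ _ p B D S P

/-- Every formula in `Δ` is atomic or ⊥. -/
def neutralM (Δ : Multiset Fm) : Prop := ∀ F ∈ Δ, F.neutral

/-- A uniform proof: an I-proof in which any sequent whose succedent contains
a non-atomic formula occurs only as the lower sequent of an inference rule
that introduces the top-level logical symbol of that formula. -/
def isUniform : ∀ (Γ Δ : Multiset Fm), CProof Γ Δ → Prop
  | _, _, @ax _ Δ _ => Multiset.card Δ = 1
  | _, _, @contrL _ _ Δ p => Multiset.card Δ = 1 ∧ neutralM Δ ∧ isUniform _ _ p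
  | _, _, @contrR B _ Δ p =>
      Multiset.card (B ::ₘ Δ) = 1 ∧ neutralM (B ::ₘ Δ) ∧ isUniform _ _ p
  | _, _, @botR D _ Δ p =>
      Multiset.card (D ::ₘ Δ) = 1 ∧ neutralM (D ::ₘ Δ) ∧ isUniform _ _ p
  | _, _, @andL _ _ _ Δ p => Multiset.card Δ = 1 ∧ neutralM Δ ∧ isUniform _ _ p
  | _, _, @andR B D _ Δ p q =>
      Multiset.card ((B.conj D) ::ₘ Δ) = 1 ∧ isUniform _ _ p ∧ isUniform _ _ q
  | _, _, @orL _ _ _ Δ p q =>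
      Multiset.card Δ = 1 ∧ neutralM Δ ∧ isUniform _ _ p ∧ isUniform _ _ q
  | _, _, @orR1 B D _ Δ p => Multiset.card ((B.disj D) ::ₘ Δ) = 1 ∧ isUniform _ _ p
  | _, _, @orR2 B D _ Δ p => Multiset.card ((B.disj D) ::ₘ Δ) = 1 ∧ isUniform _ _ p
  | _, _, @impL _ _ _ Δ Θ p q =>
      Multiset.card (Δ + Θ) = 1 ∧ neutralM (Δ + Θ) ∧ isUniform _ _ p ∧ isUniform _ _ q
  | _, _, @impR B D _ Δ p => Multiset.card ((B.imp D) ::ₘ Δ) = 1 ∧ isUniform _ _ p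
  | _, _, @allL _ _ Δ _ p => Multiset.card Δ = 1 ∧ neutralM Δ ∧ isUniform _ _ p
  | _, _, @exR B _ Δ _ p => Multiset.card ((Fm.ex B) ::ₘ Δ) = 1 ∧ isUniform _ _ p
  | _, _, @exL _ _ Δ _ _ p => Multiset.card Δ = 1 ∧ neutralM Δ ∧ isUniform _ _ p
  | _, _, @allR B _ Δ _ _ p => Multiset.card ((Fm.all B) ::ₘ Δ) = 1 ∧ isUniform _ _ p

end CProof

/-- Uniform provability: `Γ ⊢_O F`. -/
def UProv (Γ : Multiset Fm) (F : Fm) : Prop :=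
  ∃ p : CProof Γ ({F} : Multiset Fm), p.isUniform

/-- The ordering ⪰ measuring the strength of formulas as assumptions. -/
inductive Fm.ge : Fm → Fm → Prop
  | refl (F : Fm) : Fm.ge F F
  | imp {F A B : Fm} : Fm.ge F B → Fm.ge F (Fm.imp A B)
  | disjl {F A B : Fm} : Fm.ge F A → Fm.ge F (Fm.disj A B)
  | disjr {F A B : Fm} : Fm.ge F B → Fm.ge F (Fm.disj A B)
  | ex {F P : Fm} (c : ℕ) : Fm.ge F (P.inst (Tm.const c)) → Fm.ge F (Fm.ex P)

/-- `MsGe Γ₁ Γ₂`: there is an injective map κ from `Γ₂` into `Γ₁` with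
`κ(F) ⪰ F` for every `F ∈ Γ₂`. -/
def MsGe (Γ₁ Γ₂ : Multiset Fm) : Prop :=
  ∃ Γ' ≤ Γ₁, Multiset.Rel Fm.ge Γ' Γ₂

mutual
  /-- G-formulas: G ::= ⊤ | ⊥ | A | G∧G | G∨G | D⊃G | ∃x G. -/
  inductive GFm : Fm → Prop
    | top : GFm Fm.top
    | bot : GFm Fm.bot
    | atom {p : ℕ} {ts : List Tm} : GFm (Fm.atom p ts)
    | conj {a b : Fm} : GFm a → GFm b → GFm (Fm.conj a b)
    | disj {a b : Fm} : GFm a → GFm b → GFm (Fm.disj a b)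
    | imp {a b : Fm} : DFm a → GFm b → GFm (Fm.imp a b)
    | ex {a : Fm} : GFm a → GFm (Fm.ex a)

  /-- D-formulas: D ::= ⊤ | ⊥ | A | G⊃D | D∧D | D∨D | ∃x D | ∀x D. -/
  inductive DFm : Fm → Prop
    | top : DFm Fm.top
    | bot : DFm Fm.bot
    | atom {p : ℕ} {ts : List Tm} : DFm (Fm.atom p ts)
    | imp {a b : Fm} : GFm a → DFm b → DFm (Fm.imp a b)
    | conj {a b : Fm} : DFm a → DFm b → DFm (Fm.conj a b)
    | disj {a b : Fm} : DFm a → DFm b → DFm (Fm.disj a b)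
    | ex {a : Fm} : DFm a → DFm (Fm.ex a)
    | all {a : Fm} : DFm a → DFm (Fm.all a)
end
/-- I_G-proofs: derivations in the intuitionistic sequent calculus (single
succedent formula) augmented with the derived rules ∨-L_G and res_G, in which
the eigenvariable proviso on ∃-L and ∀-R also disallows constants in `G`. -/
inductive IGProof (G : Fm) : Multiset Fm → Fm → Type
  | ax {Γ : Multiset Fm} {F : Fm} (h : AxSeq Γ ({F} : Multiset Fm)) : IGProof G Γ F
  | contrL {B : Fm} {Γ : Multiset Fm} {F : Fm} (p : IGProof G (B ::ₘ B ::ₘ Γ) F) :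
      IGProof G (B ::ₘ Γ) F
  | botR {Γ : Multiset Fm} {F : Fm} (p : IGProof G Γ Fm.bot) : IGProof G Γ F
  | andL {B D : Fm} {Γ : Multiset Fm} {F : Fm}
      (p : IGProof G (B ::ₘ D ::ₘ (B.conj D) ::ₘ Γ) F) : IGProof G ((B.conj D) ::ₘ Γ) F
  | andR {B D : Fm} {Γ : Multiset Fm} (p : IGProof G Γ B) (q : IGProof G Γ D) :
      IGProof G Γ (B.conj D)
  | orL {B D : Fm} {Γ : Multiset Fm} {F : Fm} (p : IGProof G (B ::ₘ Γ) F)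
      (q : IGProof G (D ::ₘ Γ) F) : IGProof G ((B.disj D) ::ₘ Γ) F
  | orR1 {B D : Fm} {Γ : Multiset Fm} (p : IGProof G Γ B) : IGProof G Γ (B.disj D)
  | orR2 {B D : Fm} {Γ : Multiset Fm} (p : IGProof G Γ D) : IGProof G Γ (B.disj D)
  | impL {B D : Fm} {Γ : Multiset Fm} {F : Fm} (p : IGProof G ((B.imp D) ::ₘ Γ) B)
      (q : IGProof G (D ::ₘ Γ) F) : IGProof G ((B.imp D) ::ₘ Γ) F
  | impR {B D : Fm} {Γ : Multiset Fm} (p : IGProof G (B ::ₘ Γ) D) : IGProof G Γ (B.imp D)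
  | allL {B : Fm} {Γ : Multiset Fm} {F : Fm} (t : Tm)
      (p : IGProof G ((B.inst t) ::ₘ (Fm.all B) ::ₘ Γ) F) : IGProof G ((Fm.all B) ::ₘ Γ) F
  | exR {B : Fm} {Γ : Multiset Fm} (t : Tm) (p : IGProof G Γ (B.inst t)) :
      IGProof G Γ (Fm.ex B)
  | exL {B : Fm} {Γ : Multiset Fm} {F : Fm} (c : ℕ)
      (hc : FreshSeq c ((Fm.ex B) ::ₘ Γ) ({F} : Multiset Fm)) (hG : ¬ G.constIn c)
      (p : IGProof G ((B.inst (Tm.const c)) ::ₘ Γ) F) : IGProof G ((Fm.ex B) ::ₘ Γ) F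
  | allR {B : Fm} {Γ : Multiset Fm} (c : ℕ)
      (hc : FreshSeq c Γ ({Fm.all B} : Multiset Fm)) (hG : ¬ G.constIn c)
      (p : IGProof G Γ (B.inst (Tm.const c))) : IGProof G Γ (Fm.all B)
  | orLG {B D : Fm} {Γ : Multiset Fm} {F : Fm} (p : IGProof G (B ::ₘ Γ) F)
      (q : IGProof G (D ::ₘ Γ) G) : IGProof G ((B.disj D) ::ₘ Γ) F
  | resG {Γ : Multiset Fm} {F : Fm} (p : IGProof G Γ G) : IGProof G Γ F

namespace IGProof

/-- The number of occurrences of the ∨-L rule in an I_G-proof. -/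
def orLCount : ∀ (G : Fm) (Γ : Multiset Fm) (F : Fm), IGProof G Γ F → ℕ
  | _, _, _, ax _ => 0
  | _, _, _, contrL p => orLCount _ _ _ p
  | _, _, _, botR p => orLCount _ _ _ p
  | _, _, _, andL p => orLCount _ _ _ p
  | _, _, _, andR p q => orLCount _ _ _ p + orLCount _ _ _ q
  | _, _, _, orL p q => orLCount _ _ _ p + orLCount _ _ _ q + 1
  | _, _, _, orR1 p => orLCount _ _ _ p
  | _, _, _, orR2 p => orLCount _ _ _ p
  | _, _, _, impL p q => orLCount _ _ _ p + orLCount _ _ _ q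
  | _, _, _, impR p => orLCount _ _ _ p
  | _, _, _, allL _ p => orLCount _ _ _ p
  | _, _, _, exR _ p => orLCount _ _ _ p
  | _, _, _, exL _ _ _ p => orLCount _ _ _ p
  | _, _, _, allR _ _ _ p => orLCount _ _ _ p
  | _, _, _, orLG p q => orLCount _ _ _ p + orLCount _ _ _ q
  | _, _, _, resG p => orLCount _ _ _ p

/-- The height of an I_G-proof: the length of its longest branch. -/
def height : ∀ (G : Fm) (Γ : Multiset Fm) (F : Fm), IGProof G Γ F → ℕ
  | _, _, _, ax _ => 1
  | _, _, _, contrL p => height _ _ _ p + 1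
  | _, _, _, botR p => height _ _ _ p + 1
  | _, _, _, andL p => height _ _ _ p + 1
  | _, _, _, andR p q => max (height _ _ _ p) (height _ _ _ q) + 1
  | _, _, _, orL p q => max (height _ _ _ p) (height _ _ _ q) + 1
  | _, _, _, orR1 p => height _ _ _ p + 1
  | _, _, _, orR2 p => height _ _ _ p + 1
  | _, _, _, impL p q => max (height _ _ _ p) (height _ _ _ q) + 1
  | _, _, _, impR p => height _ _ _ p + 1
  | _, _, _, allL _ p => height _ _ _ p + 1
  | _, _, _, exR _ p => height _ _ _ p + 1
  | _, _, _, exL _ _ _ p => height _ _ _ p + 1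
  | _, _, _, allR _ _ _ p => height _ _ _ p + 1
  | _, _, _, orLG p q => max (height _ _ _ p) (height _ _ _ q) + 1
  | _, _, _, resG p => height _ _ _ p + 1

/-- The number of sequents appearing in an I_G-proof. -/
def size : ∀ (G : Fm) (Γ : Multiset Fm) (F : Fm), IGProof G Γ F → ℕ
  | _, _, _, ax _ => 1
  | _, _, _, contrL p => size _ _ _ p + 1
  | _, _, _, botR p => size _ _ _ p + 1
  | _, _, _, andL p => size _ _ _ p + 1
  | _, _, _, andR p q => size _ _ _ p + size _ _ _ q + 1
  | _, _, _, orL p q => size _ _ _ p + size _ _ _ q + 1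
  | _, _, _, orR1 p => size _ _ _ p + 1
  | _, _, _, orR2 p => size _ _ _ p + 1
  | _, _, _, impL p q => size _ _ _ p + size _ _ _ q + 1
  | _, _, _, impR p => size _ _ _ p + 1
  | _, _, _, allL _ p => size _ _ _ p + 1
  | _, _, _, exR _ p => size _ _ _ p + 1
  | _, _, _, exL _ _ _ p => size _ _ _ p + 1
  | _, _, _, allR _ _ _ p => size _ _ _ p + 1
  | _, _, _, orLG p q => size _ _ _ p + size _ _ _ q + 1
  | _, _, _, resG p => size _ _ _ p + 1

/-- O_G-proofs: I_G-proofs containing no occurrence of the ∨-L rule, in which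
any sequent whose succedent contains a non-atomic formula occurs only as the
lower sequent of a rule introducing the top-level symbol of that formula. -/
def isOG : ∀ (G : Fm) (Γ : Multiset Fm) (F : Fm), IGProof G Γ F → Prop
  | _, _, _, ax _ => True
  | _, _, _, @contrL _ _ _ F p => F.neutral ∧ isOG _ _ _ p
  | _, _, _, @botR _ _ F p => F.neutral ∧ isOG _ _ _ p
  | _, _, _, @andL _ _ _ _ F p => F.neutral ∧ isOG _ _ _ p
  | _, _, _, andR p q => isOG _ _ _ p ∧ isOG _ _ _ q
  | _, _, _, orL _ _ => False
  | _, _, _, orR1 p => isOG _ _ _ p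
  | _, _, _, orR2 p => isOG _ _ _ p
  | _, _, _, @impL _ _ _ _ F p q => F.neutral ∧ isOG _ _ _ p ∧ isOG _ _ _ q
  | _, _, _, impR p => isOG _ _ _ p
  | _, _, _, @allL _ _ _ F _ p => F.neutral ∧ isOG _ _ _ p
  | _, _, _, exR _ p => isOG _ _ _ p
  | _, _, _, @exL _ _ _ F _ _ _ p => F.neutral ∧ isOG _ _ _ p
  | _, _, _, allR _ _ _ p => isOG _ _ _ p
  | _, _, _, @orLG _ _ _ _ F p q => F.neutral ∧ isOG _ _ _ p ∧ isOG _ _ _ q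
  | _, _, _, @resG _ _ F p => F.neutral ∧ isOG _ _ _ p

/-- `hasOrL p B D S F` holds when an ∨-L rule with upper sequents `B,S → F`
and `D,S → F` and lower sequent `B∨D,S → F` occurs in the I_G-proof `p`. -/
def hasOrL : ∀ (G : Fm) (Γ : Multiset Fm) (W : Fm), IGProof G Γ W →
    Fm → Fm → Multiset Fm → Fm → Prop
  | _, _, _, ax _, _, _, _, _ => False
  | _, _, _, contrL p, B, D, S, F => hasOrL _ _ _ p B D S F
  | _, _, _, botR p, B, D, S, F => hasOrL _ _ _ p B D S F
  | _, _, _, andL p, B, D, S, F => hasOrL _ _ _ p B D S F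
  | _, _, _, andR p q, B, D, S, F => hasOrL _ _ _ p B D S F ∨ hasOrL _ _ _ q B D S F
  | _, _, _, @orL _ B' D' Γ' F' p q, B, D, S, F =>
      (B' = B ∧ D' = D ∧ Γ' = S ∧ F' = F) ∨ hasOrL _ _ _ p B D S F ∨ hasOrL _ _ _ q B D S F
  | _, _, _, orR1 p, B, D, S, F => hasOrL _ _ _ p B D S F
  | _, _, _, orR2 p, B, D, S, F => hasOrL _ _ _ p B D S F
  | _, _, _, impL p q, B, D, S, F => hasOrL _ _ _ p B D S F ∨ hasOrL _ _ _ q B D S F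
  | _, _, _, impR p, B, D, S, F => hasOrL _ _ _ p B D S F
  | _, _, _, allL _ p, B, D, S, F => hasOrL _ _ _ p B D S F
  | _, _, _, exR _ p, B, D, S, F => hasOrL _ _ _ p B D S F
  | _, _, _, exL _ _ _ p, B, D, S, F => hasOrL _ _ _ p B D S F
  | _, _, _, allR _ _ _ p, B, D, S, F => hasOrL _ _ _ p B D S F
  | _, _, _, orLG p q, B, D, S, F => hasOrL _ _ _ p B D S F ∨ hasOrL _ _ _ q B D S F
  | _, _, _, resG p, B, D, S, F => hasOrL _ _ _ p B D S F

end IGProof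

/-- In the simplified syntax, `A` ranges over atomic formulas together with
⊤ and ⊥. -/
def AtFm (F : Fm) : Prop := F.isAtom ∨ F = Fm.top ∨ F = Fm.bot

/-- `disjs A [B₁,…,Bₙ]` is the disjunction `A ∨ B₁ ∨ … ∨ Bₙ`. -/
def disjs (A : Fm) : List Fm → Fm
  | [] => A
  | B :: l => Fm.disj A (disjs B l)

mutual
  /-- Goals in the simplified syntax: G ::= A | G∧G | G∨G | D⊃G | ∃x G. -/
  inductive Goal : Fm → Prop
    | atm {A : Fm} : AtFm A → Goal A
    | conj {a b : Fm} : Goal a → Goal b → Goal (Fm.conj a b)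
    | disj {a b : Fm} : Goal a → Goal b → Goal (Fm.disj a b)
    | imp {a b : Fm} : PCl a → Goal b → Goal (Fm.imp a b)
    | ex {a : Fm} : Goal a → Goal (Fm.ex a)

  /-- Program clauses in the simplified syntax:
  D ::= (A∨…∨A) | G⊃(A∨…∨A) | ∀x D. -/
  inductive PCl : Fm → Prop
    | head {A : Fm} {l : List Fm} : AtFm A → (∀ B ∈ l, AtFm B) → PCl (disjs A l)
    | impHead {g A : Fm} {l : List Fm} : Goal g → AtFm A → (∀ B ∈ l, AtFm B) →
        PCl (Fm.imp g (disjs A l))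
    | all {d : Fm} : PCl d → PCl (Fm.all d)
end

/-- The instances `[D]` of a program clause `D`, as pairs whose first
component is `∅` (`none`) or `{G}` (`some G`) and whose second component is
the collection of head atoms. -/
inductive ClInst : Fm → Option Fm → Multiset Fm → Prop
  | head {A : Fm} {l : List Fm} : AtFm A → (∀ B ∈ l, AtFm B) →
      ClInst (disjs A l) none (A ::ₘ (l : Multiset Fm))
  | impHead {g A : Fm} {l : List Fm} : Goal g → AtFm A → (∀ B ∈ l, AtFm B) →
      ClInst (Fm.imp g (disjs A l)) (some g) (A ::ₘ (l : Multiset Fm))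
  | all {d : Fm} {o : Option Fm} {m : Multiset Fm} (t : Tm) :
      ClInst (d.inst t) o m → ClInst (Fm.all d) o m

/-- `[Γ]`: the instances of the clauses in `Γ`. -/
def GammaInst (Γ : Multiset Fm) (o : Option Fm) (m : Multiset Fm) : Prop :=
  ∃ D ∈ Γ, ClInst D o m

/-- The reduced proof system relative to the goal `G`: axioms `Δ → ⊤`, the
rules RESTART, ATOMIC and BACKCHAIN relativized to `G`, and ∨-R, ∧-R, ⊃-R
and ∃-R. -/
inductive RP (G : Fm) : Multiset Fm → Fm → Prop
  | topAx {Γ : Multiset Fm} : RP G Γ Fm.top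
  | restart {Γ : Multiset Fm} {C : Fm} (hC : C.isAtom ∨ C = Fm.bot) (p : RP G Γ G) :
      RP G Γ C
  | atomic {Γ : Multiset Fm} {C : Fm} {m : Multiset Fm} (hC : C.isAtom ∨ C = Fm.bot)
      (h : GammaInst Γ none (C ::ₘ m) ∨ GammaInst Γ none (Fm.bot ::ₘ m))
      (ps : ∀ A ∈ m, RP G (A ::ₘ Γ) G) : RP G Γ C
  | backchain {Γ : Multiset Fm} {C G' : Fm} {m : Multiset Fm}
      (hC : C.isAtom ∨ C = Fm.bot)
      (h : GammaInst Γ (some G') (C ::ₘ m) ∨ GammaInst Γ (some G') (Fm.bot ::ₘ m))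
      (p : RP G Γ G') (ps : ∀ A ∈ m, RP G (A ::ₘ Γ) G) : RP G Γ C
  | orR1 {Γ : Multiset Fm} {B D : Fm} (p : RP G Γ B) : RP G Γ (B.disj D)
  | orR2 {Γ : Multiset Fm} {B D : Fm} (p : RP G Γ D) : RP G Γ (B.disj D)
  | andR {Γ : Multiset Fm} {B D : Fm} (p : RP G Γ B) (q : RP G Γ D) : RP G Γ (B.conj D)
  | impR {Γ : Multiset Fm} {B D : Fm} (p : RP G (B ::ₘ Γ) D) : RP G Γ (B.imp D)
  | exR {Γ : Multiset Fm} {B : Fm} (t : Tm) (p : RP G Γ (B.inst t)) : RP G Γ (Fm.ex B)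

deriving instance DecidableEq for Tm
deriving instance DecidableEq for Fm

namespace Tm

/-- rename constant c to d -/
def ren (c d : ℕ) : Tm → Tm
  | var n => var n
  | const e => const (if e = c then d else e)

def tbnd : Tm → ℕ
  | var _ => 0
  | const e => e + 1

theorem tbnd_spec {t : Tm} {e : ℕ} (h : tbnd t ≤ e) : ¬ t.constIn e := by
  cases t with
  | var n => simp [constIn]
  | const f => simp [constIn, tbnd] at *; omega

theorem ren_fresh {c d : ℕ} {t : Tm} (h : ¬ t.constIn c) : ren c d t = t := by
  cases t with
  | var n => rfl
  | const f => simp [constIn] at h; simp [ren, h]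

theorem constIn_ren {c d e : ℕ} (hed : e ≠ d) (t : Tm) :
    (ren c d t).constIn e ↔ (e ≠ c ∧ t.constIn e) := by
  cases t with
  | var n => simp [ren, constIn]
  | const f =>
      by_cases hf : f = c <;> simp [ren, hf, constIn]
      · constructor
        · intro h; exact absurd h.symm hed
        · rintro ⟨h1, h2⟩; subst hf; exact absurd h2.symm h1
      · intro h; subst h; exact fun h2 => hf h2

theorem ren_subst (c d k : ℕ) (u t : Tm) :
    ren c d (Tm.subst k u t) = Tm.subst k (ren c d u) (ren c d t) := by
  cases t with
  | var n => by_cases h : n = k <;> simp [Tm.subst, ren, h]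
  | const f => simp [Tm.subst, ren]

end Tm

namespace Fm

def ren (c d : ℕ) : Fm → Fm
  | top => top
  | bot => bot
  | atom p ts => atom p (ts.map (Tm.ren c d))
  | conj a b => conj (ren c d a) (ren c d b)
  | disj a b => disj (ren c d a) (ren c d b)
  | imp a b => imp (ren c d a) (ren c d b)
  | ex a => ex (ren c d a)
  | all a => all (ren c d a)

def fbnd : Fm → ℕ
  | top => 0
  | bot => 0
  | atom _ ts => (ts.map Tm.tbnd).foldr max 0
  | conj a b => max (fbnd a) (fbnd b)
  | disj a b => max (fbnd a) (fbnd b)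
  | imp a b => max (fbnd a) (fbnd b)
  | ex a => fbnd a
  | all a => fbnd a

theorem fbnd_spec : ∀ {F : Fm} {e : ℕ}, fbnd F ≤ e → ¬ F.constIn e := by
  intro F
  induction F with
  | top => simp [constIn]
  | bot => simp [constIn]
  | atom p ts =>
      intro e h
      simp only [constIn]
      rintro ⟨t, ht, hc⟩
      have hb : Tm.tbnd t ≤ (ts.map Tm.tbnd).foldr max 0 := by
        clear h hc
        induction ts with
        | nil => simp at ht
        | cons a l ih =>
            rcases List.mem_cons.1 ht with rfl | h'
            · simp only [List.map, List.foldr]; exact le_max_left _ _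
            · simp only [List.map, List.foldr]
              exact le_trans (ih h') (le_max_right _ _)
      exact Tm.tbnd_spec (le_trans hb h) hc
  | conj a b iha ihb =>
      intro e h; simp [constIn, fbnd] at h ⊢
      exact ⟨iha h.1, ihb h.2⟩
  | disj a b iha ihb =>
      intro e h; simp [constIn, fbnd] at h ⊢
      exact ⟨iha h.1, ihb h.2⟩
  | imp a b iha ihb =>
      intro e h; simp [constIn, fbnd] at h ⊢
      exact ⟨iha h.1, ihb h.2⟩
  | ex a iha => intro e h; simp [constIn, fbnd] at h ⊢; exact iha h
  | all a iha => intro e h; simp [constIn, fbnd] at h ⊢; exact iha h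

theorem ren_fresh : ∀ {F : Fm} {c d : ℕ}, ¬ F.constIn c → ren c d F = F := by
  intro F
  induction F with
  | top => intro c d h; rfl
  | bot => intro c d h; rfl
  | atom p ts =>
      intro c d h
      simp only [constIn] at h
      push_neg at h
      simp only [ren, atom.injEq, true_and]
      have : ∀ t ∈ ts, Tm.ren c d t = t := fun t ht => Tm.ren_fresh (h t ht)
      calc ts.map (Tm.ren c d) = ts.map id := List.map_congr_left (by simpa using this)
        _ = ts := List.map_id ts
  | conj a b iha ihb => intro c d h; simp [constIn] at h; simp [ren, iha h.1, ihb h.2]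
  | disj a b iha ihb => intro c d h; simp [constIn] at h; simp [ren, iha h.1, ihb h.2]
  | imp a b iha ihb => intro c d h; simp [constIn] at h; simp [ren, iha h.1, ihb h.2]
  | ex a iha => intro c d h; simp [constIn] at h; simp [ren, iha h]
  | all a iha => intro c d h; simp [constIn] at h; simp [ren, iha h]

end Fm

namespace Fm

theorem constIn_ren {c d e : ℕ} (hed : e ≠ d) : ∀ (F : Fm),
    (ren c d F).constIn e ↔ (e ≠ c ∧ F.constIn e) := by
  intro F
  induction F with
  | top => simp [ren, constIn]
  | bot => simp [ren, constIn]
  | atom p ts =>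
      simp only [ren, constIn, List.mem_map]
      constructor
      · rintro ⟨t', ⟨t, ht, rfl⟩, hc⟩
        have := (Tm.constIn_ren hed t).1 hc
        exact ⟨this.1, t, ht, this.2⟩
      · rintro ⟨hec, t, ht, hc⟩
        exact ⟨Tm.ren c d t, ⟨t, ht, rfl⟩, (Tm.constIn_ren hed t).2 ⟨hec, hc⟩⟩
  | conj a b iha ihb => simp [ren, constIn, iha, ihb]; tauto
  | disj a b iha ihb => simp [ren, constIn, iha, ihb]; tauto
  | imp a b iha ihb => simp [ren, constIn, iha, ihb]; tauto
  | ex a iha => simpa [ren, constIn] using iha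
  | all a iha => simpa [ren, constIn] using iha

theorem ren_subst (c d : ℕ) : ∀ (F : Fm) (k : ℕ) (u : Tm),
    ren c d (Fm.subst k u F) = Fm.subst k (Tm.ren c d u) (ren c d F) := by
  intro F
  induction F with
  | top => intros; rfl
  | bot => intros; rfl
  | atom p ts =>
      intro k u
      simp only [Fm.subst, ren, atom.injEq, true_and, List.map_map]
      apply List.map_congr_left
      intro t _
      exact Tm.ren_subst c d k u t
  | conj a b iha ihb => intro k u; simp [Fm.subst, ren, iha, ihb]
  | disj a b iha ihb => intro k u; simp [Fm.subst, ren, iha, ihb]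
  | imp a b iha ihb => intro k u; simp [Fm.subst, ren, iha, ihb]
  | ex a iha => intro k u; simp [Fm.subst, ren, iha]
  | all a iha => intro k u; simp [Fm.subst, ren, iha]

theorem ren_inst (c d : ℕ) (B : Fm) (hB : ¬ B.constIn c) (t : Tm) :
    ren c d (B.inst t) = B.inst (Tm.ren c d t) := by
  rw [Fm.inst, ren_subst, ren_fresh hB]; rfl

end Fm

/-- G- and D-formulas are closed under substitution. -/
theorem GD_subst : ∀ (a : Fm), (∀ k u, GFm a → GFm (Fm.subst k u a)) ∧
    (∀ k u, DFm a → DFm (Fm.subst k u a)) := by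
  intro a
  induction a with
  | top => exact ⟨fun _ _ _ => GFm.top, fun _ _ _ => DFm.top⟩
  | bot => exact ⟨fun _ _ _ => GFm.bot, fun _ _ _ => DFm.bot⟩
  | atom p ts => exact ⟨fun _ _ _ => GFm.atom, fun _ _ _ => DFm.atom⟩
  | conj a b iha ihb =>
      constructor
      · intro k u h; cases h with
        | conj h1 h2 => exact GFm.conj (iha.1 k u h1) (ihb.1 k u h2)
      · intro k u h; cases h with
        | conj h1 h2 => exact DFm.conj (iha.2 k u h1) (ihb.2 k u h2)
  | disj a b iha ihb =>
      constructor
      · intro k u h; cases h with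
        | disj h1 h2 => exact GFm.disj (iha.1 k u h1) (ihb.1 k u h2)
      · intro k u h; cases h with
        | disj h1 h2 => exact DFm.disj (iha.2 k u h1) (ihb.2 k u h2)
  | imp a b iha ihb =>
      constructor
      · intro k u h; cases h with
        | imp h1 h2 => exact GFm.imp (iha.2 k u h1) (ihb.1 k u h2)
      · intro k u h; cases h with
        | imp h1 h2 => exact DFm.imp (iha.1 k u h1) (ihb.2 k u h2)
  | ex a iha =>
      constructor
      · intro k u h; cases h with
        | ex h1 => exact GFm.ex (iha.1 (k+1) u h1)
      · intro k u h; cases h with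
        | ex h1 => exact DFm.ex (iha.2 (k+1) u h1)
  | all a iha =>
      constructor
      · intro k u h; cases h
      · intro k u h; cases h with
        | all h1 => exact DFm.all (iha.2 (k+1) u h1)

theorem GFm_inst {a : Fm} (h : GFm (Fm.ex a)) (t : Tm) : GFm (a.inst t) := by
  cases h with | ex h1 => exact (GD_subst a).1 0 t h1

theorem DFm_inst_ex {a : Fm} (h : DFm (Fm.ex a)) (t : Tm) : DFm (a.inst t) := by
  cases h with | ex h1 => exact (GD_subst a).2 0 t h1

theorem DFm_inst_all {a : Fm} (h : DFm (Fm.all a)) (t : Tm) : DFm (a.inst t) := by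
  cases h with | all h1 => exact (GD_subst a).2 0 t h1

/-- bound of a multiset of formulas -/
def msbnd (Γ : Multiset Fm) : ℕ := (Γ.map Fm.fbnd).sum

theorem msbnd_spec {Γ : Multiset Fm} {F : Fm} (hF : F ∈ Γ) {e : ℕ} (h : msbnd Γ ≤ e) :
    ¬ F.constIn e := by
  apply Fm.fbnd_spec
  calc Fm.fbnd F ≤ msbnd Γ := Multiset.le_sum_of_mem (Multiset.mem_map_of_mem _ hF)
  _ ≤ e := h

theorem msbnd_cons (F : Fm) (Γ : Multiset Fm) : msbnd (F ::ₘ Γ) = Fm.fbnd F + msbnd Γ := by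
  simp [msbnd]

theorem msbnd_fresh {Γ : Multiset Fm} {e : ℕ} (h : msbnd Γ ≤ e) :
    ∀ F ∈ Γ, ¬ F.constIn e := fun F hF => msbnd_spec hF h

theorem ms_ren_fresh {c d : ℕ} {Γ : Multiset Fm} (h : ∀ F ∈ Γ, ¬ F.constIn c) :
    Γ.map (Fm.ren c d) = Γ := by
  rw [show Γ.map (Fm.ren c d) = Γ.map id from Multiset.map_congr rfl
    (fun F hF => Fm.ren_fresh (h F hF)), Multiset.map_id]

namespace CProof

/-- size of a C-proof -/
def csize : ∀ {Γ Δ : Multiset Fm}, CProof Γ Δ → ℕ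
  | _, _, ax _ => 1
  | _, _, contrL p => csize p + 1
  | _, _, contrR p => csize p + 1
  | _, _, botR p => csize p + 1
  | _, _, andL p => csize p + 1
  | _, _, andR p q => csize p + csize q + 1
  | _, _, orL p q => csize p + csize q + 1
  | _, _, orR1 p => csize p + 1
  | _, _, orR2 p => csize p + 1
  | _, _, impL p q => csize p + csize q + 1
  | _, _, impR p => csize p + 1
  | _, _, allL _ p => csize p + 1
  | _, _, exR _ p => csize p + 1
  | _, _, exL _ _ p => csize p + 1
  | _, _, allR _ _ p => csize p + 1

/-- constant bound of a C-proof: exceeds every constant in every sequent and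
every eigenvariable -/
def pbnd : ∀ {Γ Δ : Multiset Fm}, CProof Γ Δ → ℕ
  | Γ, Δ, ax _ => msbnd Γ + msbnd Δ
  | _, Δ, @contrL B Γ _ p => msbnd (B ::ₘ Γ) + msbnd Δ + pbnd p
  | Γ, _, @contrR B _ Δ p => msbnd Γ + msbnd (B ::ₘ Δ) + pbnd p
  | Γ, _, @botR D _ Δ p => msbnd Γ + msbnd (D ::ₘ Δ) + pbnd p
  | _, Δ, @andL B D Γ _ p => msbnd ((B.conj D) ::ₘ Γ) + msbnd Δ + pbnd p
  | Γ, _, @andR B D _ Δ p q => msbnd Γ + msbnd ((B.conj D) ::ₘ Δ) + pbnd p + pbnd q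
  | _, Δ, @orL B D Γ _ p q => msbnd ((B.disj D) ::ₘ Γ) + msbnd Δ + pbnd p + pbnd q
  | Γ, _, @orR1 B D _ Δ p => msbnd Γ + msbnd ((B.disj D) ::ₘ Δ) + pbnd p
  | Γ, _, @orR2 B D _ Δ p => msbnd Γ + msbnd ((B.disj D) ::ₘ Δ) + pbnd p
  | _, _, @impL B D Γ Δ Θ p q => msbnd ((B.imp D) ::ₘ Γ) + msbnd (Δ + Θ) + pbnd p + pbnd q
  | Γ, _, @impR B D _ Δ p => msbnd Γ + msbnd ((B.imp D) ::ₘ Δ) + pbnd p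
  | _, Δ, @allL B Γ _ _ p => msbnd ((Fm.all B) ::ₘ Γ) + msbnd Δ + pbnd p
  | Γ, _, @exR B _ Δ _ p => msbnd Γ + msbnd ((Fm.ex B) ::ₘ Δ) + pbnd p
  | _, Δ, @exL B Γ _ c _ p => msbnd ((Fm.ex B) ::ₘ Γ) + msbnd Δ + pbnd p + (c + 1)
  | Γ, _, @allR B _ Δ c _ p => msbnd Γ + msbnd ((Fm.all B) ::ₘ Δ) + pbnd p + (c + 1)

/-- cast a proof along multiset equalities -/
def pcast {Γ Γ' Δ Δ' : Multiset Fm} (hΓ : Γ = Γ') (hΔ : Δ = Δ') (p : CProof Γ Δ) :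
    CProof Γ' Δ' := hΓ ▸ hΔ ▸ p

theorem csize_pcast {Γ Γ' Δ Δ' : Multiset Fm} (hΓ : Γ = Γ') (hΔ : Δ = Δ')
    (p : CProof Γ Δ) : csize (pcast hΓ hΔ p) = csize p := by
  subst hΓ; subst hΔ; rfl

theorem isI_pcast {Γ Γ' Δ Δ' : Multiset Fm} (hΓ : Γ = Γ') (hΔ : Δ = Δ')
    (p : CProof Γ Δ) : isI _ _ (pcast hΓ hΔ p) = isI _ _ p := by
  subst hΓ; subst hΔ; rfl

end CProof

theorem axseq_ren {Γ Δ : Multiset Fm} (c d : ℕ) (h : AxSeq Γ Δ) :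
    AxSeq (Γ.map (Fm.ren c d)) (Δ.map (Fm.ren c d)) := by
  rcases h with h | ⟨A, hA, h1, h2⟩
  · left
    have := Multiset.mem_map_of_mem (Fm.ren c d) h
    simpa [Fm.ren] using this
  · right
    refine ⟨Fm.ren c d A, ?_, Multiset.mem_map_of_mem _ h1, Multiset.mem_map_of_mem _ h2⟩
    rcases hA with rfl | hA
    · left; rfl
    · right; cases A <;> simp [Fm.isAtom, Fm.ren] at hA ⊢

theorem fresh_ren_ms {c d e : ℕ} {S : Multiset Fm} (hc : ∀ F ∈ S, ¬ F.constIn e)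
    (hd : msbnd S ≤ d) (hcase : e = c ∨ e ≠ d) :
    ∀ F' ∈ S.map (Fm.ren c d), ¬ F'.constIn (if e = c then d else e) := by
  rintro F' hF'
  rw [Multiset.mem_map] at hF'
  obtain ⟨F, hF, rfl⟩ := hF'
  by_cases hec : e = c
  · subst hec
    simp only [if_pos rfl]
    rw [Fm.ren_fresh (hc F hF)]
    exact msbnd_spec hF hd
  · simp only [if_neg hec]
    have hed : e ≠ d := hcase.resolve_left hec
    rw [Fm.constIn_ren hed]
    rintro ⟨_, h2⟩
    exact hc F hF h2

open CProof in
/-- Renaming a constant in a C-proof, given that the target constant exceeds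
the bound of the proof. -/
noncomputable def crename (c d : ℕ) : ∀ {Γ Δ : Multiset Fm} (p : CProof Γ Δ), pbnd p ≤ d →
    Σ' q : CProof (Γ.map (Fm.ren c d)) (Δ.map (Fm.ren c d)), csize q = csize p := by
  intro Γ Δ p
  induction p with
  | ax h =>
      intro _
      exact ⟨CProof.ax (axseq_ren c d h), rfl⟩
  | contrL p ih =>
      rename_i B Γ' Δ'
      intro hd; simp only [pbnd] at hd
      obtain ⟨q, hq⟩ := ih (by omega)
      obtain ⟨q', hs⟩ : Σ' w : CProof (Fm.ren c d B ::ₘ Fm.ren c d B ::ₘ Γ'.map (Fm.ren c d))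
          (Δ'.map (Fm.ren c d)), w.csize = q.csize :=
        ⟨pcast (by simp) rfl q, csize_pcast _ _ _⟩
      exact ⟨pcast (by simp) rfl (CProof.contrL q'), by simp [csize, csize_pcast, hq, hs]⟩
  | contrR p ih =>
      rename_i B Γ' Δ'
      intro hd; simp only [pbnd] at hd
      obtain ⟨q, hq⟩ := ih (by omega)
      obtain ⟨q', hs⟩ : Σ' w : CProof (Γ'.map (Fm.ren c d))
          (Fm.ren c d B ::ₘ Fm.ren c d B ::ₘ Δ'.map (Fm.ren c d)), w.csize = q.csize :=
        ⟨pcast rfl (by simp) q, csize_pcast _ _ _⟩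
      exact ⟨pcast rfl (by simp) (CProof.contrR q'), by simp [csize, csize_pcast, hq, hs]⟩
  | botR p ih =>
      rename_i D Γ' Δ'
      intro hd; simp only [pbnd] at hd
      obtain ⟨q, hq⟩ := ih (by omega)
      obtain ⟨q', hs⟩ : Σ' w : CProof (Γ'.map (Fm.ren c d)) (Fm.bot ::ₘ Δ'.map (Fm.ren c d)), w.csize = q.csize :=
        ⟨pcast rfl (by simp [Fm.ren]) q, csize_pcast _ _ _⟩
      exact ⟨pcast rfl (by simp) (CProof.botR (D := Fm.ren c d D) q'),
        by simp [csize, csize_pcast, hq, hs]⟩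
  | andL p ih =>
      rename_i B D Γ' Δ'
      intro hd; simp only [pbnd] at hd
      obtain ⟨q, hq⟩ := ih (by omega)
      obtain ⟨q', hs⟩ : Σ' w : CProof (Fm.ren c d B ::ₘ Fm.ren c d D ::ₘ
          (Fm.ren c d B).conj (Fm.ren c d D) ::ₘ Γ'.map (Fm.ren c d))
          (Δ'.map (Fm.ren c d)), w.csize = q.csize :=
        ⟨pcast (by simp [Fm.ren]) rfl q, csize_pcast _ _ _⟩
      exact ⟨pcast (by simp [Fm.ren]) rfl (CProof.andL q'),
        by simp [csize, csize_pcast, hq, hs]⟩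
  | andR p q ihp ihq =>
      rename_i B D Γ' Δ'
      intro hd; simp only [pbnd] at hd
      obtain ⟨q1, hq1⟩ := ihp (by omega)
      obtain ⟨q2, hq2⟩ := ihq (by omega)
      obtain ⟨q1', hs1⟩ : Σ' w : CProof (Γ'.map (Fm.ren c d)) (Fm.ren c d B ::ₘ Δ'.map (Fm.ren c d)), w.csize = q1.csize :=
        ⟨pcast rfl (by simp) q1, csize_pcast _ _ _⟩
      obtain ⟨q2', hs2⟩ : Σ' w : CProof (Γ'.map (Fm.ren c d)) (Fm.ren c d D ::ₘ Δ'.map (Fm.ren c d)), w.csize = q2.csize :=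
        ⟨pcast rfl (by simp) q2, csize_pcast _ _ _⟩
      exact ⟨pcast rfl (by simp [Fm.ren]) (CProof.andR q1' q2'),
        by simp [csize, csize_pcast, hq1, hq2, hs1, hs2]⟩
  | orL p q ihp ihq =>
      rename_i B D Γ' Δ'
      intro hd; simp only [pbnd] at hd
      obtain ⟨q1, hq1⟩ := ihp (by omega)
      obtain ⟨q2, hq2⟩ := ihq (by omega)
      obtain ⟨q1', hs1⟩ : Σ' w : CProof (Fm.ren c d B ::ₘ Γ'.map (Fm.ren c d)) (Δ'.map (Fm.ren c d)), w.csize = q1.csize :=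
        ⟨pcast (by simp) rfl q1, csize_pcast _ _ _⟩
      obtain ⟨q2', hs2⟩ : Σ' w : CProof (Fm.ren c d D ::ₘ Γ'.map (Fm.ren c d)) (Δ'.map (Fm.ren c d)), w.csize = q2.csize :=
        ⟨pcast (by simp) rfl q2, csize_pcast _ _ _⟩
      exact ⟨pcast (by simp [Fm.ren]) rfl (CProof.orL q1' q2'),
        by simp [csize, csize_pcast, hq1, hq2, hs1, hs2]⟩
  | orR1 p ih =>
      rename_i B D Γ' Δ'
      intro hd; simp only [pbnd] at hd
      obtain ⟨q, hq⟩ := ih (by omega)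
      obtain ⟨q', hs⟩ : Σ' w : CProof (Γ'.map (Fm.ren c d)) (Fm.ren c d B ::ₘ Δ'.map (Fm.ren c d)), w.csize = q.csize :=
        ⟨pcast rfl (by simp) q, csize_pcast _ _ _⟩
      exact ⟨pcast rfl (by simp [Fm.ren]) (CProof.orR1 (D := Fm.ren c d D) q'),
        by simp [csize, csize_pcast, hq, hs]⟩
  | orR2 p ih =>
      rename_i B D Γ' Δ'
      intro hd; simp only [pbnd] at hd
      obtain ⟨q, hq⟩ := ih (by omega)
      obtain ⟨q', hs⟩ : Σ' w : CProof (Γ'.map (Fm.ren c d)) (Fm.ren c d D ::ₘ Δ'.map (Fm.ren c d)), w.csize = q.csize :=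
        ⟨pcast rfl (by simp) q, csize_pcast _ _ _⟩
      exact ⟨pcast rfl (by simp [Fm.ren]) (CProof.orR2 (B := Fm.ren c d B) q'),
        by simp [csize, csize_pcast, hq, hs]⟩
  | impL p q ihp ihq =>
      rename_i B D Γ' Δ' Θ'
      intro hd; simp only [pbnd] at hd
      obtain ⟨q1, hq1⟩ := ihp (by omega)
      obtain ⟨q2, hq2⟩ := ihq (by omega)
      obtain ⟨q1', hs1⟩ : Σ' w : CProof ((Fm.ren c d B).imp (Fm.ren c d D) ::ₘ Γ'.map (Fm.ren c d))
          (Fm.ren c d B ::ₘ Δ'.map (Fm.ren c d)), w.csize = q1.csize :=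
        ⟨pcast (by simp [Fm.ren]) (by simp) q1, csize_pcast _ _ _⟩
      obtain ⟨q2', hs2⟩ : Σ' w : CProof (Fm.ren c d D ::ₘ Γ'.map (Fm.ren c d)) (Θ'.map (Fm.ren c d)), w.csize = q2.csize :=
        ⟨pcast (by simp) rfl q2, csize_pcast _ _ _⟩
      exact ⟨pcast (by simp [Fm.ren]) (by simp) (CProof.impL q1' q2'),
        by simp [csize, csize_pcast, hq1, hq2, hs1, hs2]⟩
  | impR p ih =>
      rename_i B D Γ' Δ'
      intro hd; simp only [pbnd] at hd
      obtain ⟨q, hq⟩ := ih (by omega)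
      obtain ⟨q', hs⟩ : Σ' w : CProof (Fm.ren c d B ::ₘ Γ'.map (Fm.ren c d))
          (Fm.ren c d D ::ₘ Δ'.map (Fm.ren c d)), w.csize = q.csize :=
        ⟨pcast (by simp) (by simp) q, csize_pcast _ _ _⟩
      exact ⟨pcast rfl (by simp [Fm.ren]) (CProof.impR q'),
        by simp [csize, csize_pcast, hq, hs]⟩
  | allL t p ih =>
      rename_i B Γ' Δ'
      intro hd; simp only [pbnd] at hd
      obtain ⟨q, hq⟩ := ih (by omega)
      obtain ⟨q', hs⟩ : Σ' w : CProof ((Fm.ren c d B).inst (Tm.ren c d t) ::ₘ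
          (Fm.ren c d B).all ::ₘ Γ'.map (Fm.ren c d)) (Δ'.map (Fm.ren c d)), w.csize = q.csize :=
        ⟨pcast (by simp [Fm.ren, Fm.inst, Fm.ren_subst]) rfl q, csize_pcast _ _ _⟩
      exact ⟨pcast (by simp [Fm.ren]) rfl (CProof.allL (Tm.ren c d t) q'),
        by simp [csize, csize_pcast, hq, hs]⟩
  | exR t p ih =>
      rename_i B Γ' Δ'
      intro hd; simp only [pbnd] at hd
      obtain ⟨q, hq⟩ := ih (by omega)
      obtain ⟨q', hs⟩ : Σ' w : CProof (Γ'.map (Fm.ren c d))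
          ((Fm.ren c d B).inst (Tm.ren c d t) ::ₘ Δ'.map (Fm.ren c d)), w.csize = q.csize :=
        ⟨pcast rfl (by simp [Fm.ren, Fm.inst, Fm.ren_subst]) q, csize_pcast _ _ _⟩
      exact ⟨pcast rfl (by simp [Fm.ren]) (CProof.exR (Tm.ren c d t) q'),
        by simp [csize, csize_pcast, hq, hs]⟩
  | exL e hc p ih =>
      rename_i B Γ' Δ'
      intro hd; simp only [pbnd] at hd
      obtain ⟨q, hq⟩ := ih (by omega)
      have hcase : e = c ∨ e ≠ d := by
        by_cases h : e = c
        · exact Or.inl h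
        · exact Or.inr (by omega)
      have h1 := fresh_ren_ms (c := c) (d := d) hc.1 (by omega) hcase
      have h2 := fresh_ren_ms (c := c) (d := d) hc.2 (by omega) hcase
      have hfresh : FreshSeq (if e = c then d else e)
          ((Fm.ren c d B).ex ::ₘ Γ'.map (Fm.ren c d)) (Δ'.map (Fm.ren c d)) := by
        constructor
        · intro F hF
          apply h1
          simpa [Fm.ren] using hF
        · exact h2
      obtain ⟨q', hs⟩ : Σ' w : CProof ((Fm.ren c d B).inst (Tm.const (if e = c then d else e)) ::ₘ
          Γ'.map (Fm.ren c d)) (Δ'.map (Fm.ren c d)), w.csize = q.csize :=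
        ⟨pcast (by simp [Fm.inst, Fm.ren_subst, Tm.ren]) rfl q, csize_pcast _ _ _⟩
      exact ⟨pcast (by simp [Fm.ren]) rfl (CProof.exL (if e = c then d else e) hfresh q'),
        by simp [csize, csize_pcast, hq, hs]⟩
  | allR e hc p ih =>
      rename_i B Γ' Δ'
      intro hd; simp only [pbnd] at hd
      obtain ⟨q, hq⟩ := ih (by omega)
      have hcase : e = c ∨ e ≠ d := by
        by_cases h : e = c
        · exact Or.inl h
        · exact Or.inr (by omega)
      have h1 := fresh_ren_ms (c := c) (d := d) hc.1 (by omega) hcase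
      have h2 := fresh_ren_ms (c := c) (d := d) hc.2 (by omega) hcase
      have hfresh : FreshSeq (if e = c then d else e) (Γ'.map (Fm.ren c d))
          ((Fm.ren c d B).all ::ₘ Δ'.map (Fm.ren c d)) := by
        constructor
        · exact h1
        · intro F hF
          apply h2
          simpa [Fm.ren] using hF
      obtain ⟨q', hs⟩ : Σ' w : CProof (Γ'.map (Fm.ren c d))
          ((Fm.ren c d B).inst (Tm.const (if e = c then d else e)) ::ₘ Δ'.map (Fm.ren c d)), w.csize = q.csize :=
        ⟨pcast rfl (by simp [Fm.inst, Fm.ren_subst, Tm.ren]) q, csize_pcast _ _ _⟩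
      exact ⟨pcast rfl (by simp [Fm.ren]) (CProof.allR (if e = c then d else e) hfresh q'),
        by simp [csize, csize_pcast, hq, hs]⟩

theorem axseq_weak {Γ Δ Ξ Ψ : Multiset Fm} (h : AxSeq Γ Δ) : AxSeq (Γ + Ξ) (Δ + Ψ) := by
  rcases h with h | ⟨A, hA, h1, h2⟩
  · exact Or.inl (Multiset.mem_add.2 (Or.inl h))
  · exact Or.inr ⟨A, hA, Multiset.mem_add.2 (Or.inl h1), Multiset.mem_add.2 (Or.inl h2)⟩

open CProof in
/-- Admissibility of weakening for C-proofs. -/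
theorem cweak : ∀ (n : ℕ) {Γ Δ : Multiset Fm} (p : CProof Γ Δ), csize p = n →
    ∀ (Ξ Ψ : Multiset Fm), Nonempty (CProof (Γ + Ξ) (Δ + Ψ)) := by
  intro n
  induction n using Nat.strong_induction_on with
  | _ n ih =>
  intro Γ Δ p hsz Ξ Ψ
  cases p with
  | ax h => exact ⟨CProof.ax (axseq_weak h)⟩
  | contrL p =>
      rename_i B Γ'
      simp only [csize] at hsz
      obtain ⟨q⟩ := ih _ (by omega) p rfl Ξ Ψ
      have q' : CProof (B ::ₘ B ::ₘ (Γ' + Ξ)) (Δ + Ψ) := pcast (by simp) rfl q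
      exact ⟨pcast (by simp) rfl (CProof.contrL q')⟩
  | contrR p =>
      rename_i B Δ'
      simp only [csize] at hsz
      obtain ⟨q⟩ := ih _ (by omega) p rfl Ξ Ψ
      have q' : CProof (Γ + Ξ) (B ::ₘ B ::ₘ (Δ' + Ψ)) := pcast rfl (by simp) q
      exact ⟨pcast rfl (by simp) (CProof.contrR q')⟩
  | botR p =>
      rename_i D Δ'
      simp only [csize] at hsz
      obtain ⟨q⟩ := ih _ (by omega) p rfl Ξ Ψ
      have q' : CProof (Γ + Ξ) (Fm.bot ::ₘ (Δ' + Ψ)) := pcast rfl (by simp) q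
      exact ⟨pcast rfl (by simp) (CProof.botR (D := D) q')⟩
  | andL p =>
      rename_i B D Γ'
      simp only [csize] at hsz
      obtain ⟨q⟩ := ih _ (by omega) p rfl Ξ Ψ
      have q' : CProof (B ::ₘ D ::ₘ (B.conj D) ::ₘ (Γ' + Ξ)) (Δ + Ψ) :=
        pcast (by simp) rfl q
      exact ⟨pcast (by simp) rfl (CProof.andL q')⟩
  | andR p q =>
      rename_i B D Δ'
      simp only [csize] at hsz
      obtain ⟨q1⟩ := ih _ (by omega) p rfl Ξ Ψ
      obtain ⟨q2⟩ := ih _ (by omega) q rfl Ξ Ψ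
      have q1' : CProof (Γ + Ξ) (B ::ₘ (Δ' + Ψ)) := pcast rfl (by simp) q1
      have q2' : CProof (Γ + Ξ) (D ::ₘ (Δ' + Ψ)) := pcast rfl (by simp) q2
      exact ⟨pcast rfl (by simp) (CProof.andR q1' q2')⟩
  | orL p q =>
      rename_i B D Γ'
      simp only [csize] at hsz
      obtain ⟨q1⟩ := ih _ (by omega) p rfl Ξ Ψ
      obtain ⟨q2⟩ := ih _ (by omega) q rfl Ξ Ψ
      have q1' : CProof (B ::ₘ (Γ' + Ξ)) (Δ + Ψ) := pcast (by simp) rfl q1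
      have q2' : CProof (D ::ₘ (Γ' + Ξ)) (Δ + Ψ) := pcast (by simp) rfl q2
      exact ⟨pcast (by simp) rfl (CProof.orL q1' q2')⟩
  | orR1 p =>
      rename_i B D Δ'
      simp only [csize] at hsz
      obtain ⟨q⟩ := ih _ (by omega) p rfl Ξ Ψ
      have q' : CProof (Γ + Ξ) (B ::ₘ (Δ' + Ψ)) := pcast rfl (by simp) q
      exact ⟨pcast rfl (by simp) (CProof.orR1 (D := D) q')⟩
  | orR2 p =>
      rename_i B D Δ'
      simp only [csize] at hsz
      obtain ⟨q⟩ := ih _ (by omega) p rfl Ξ Ψ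
      have q' : CProof (Γ + Ξ) (D ::ₘ (Δ' + Ψ)) := pcast rfl (by simp) q
      exact ⟨pcast rfl (by simp) (CProof.orR2 (B := B) q')⟩
  | impL p q =>
      rename_i B D Γ' Δ' Θ'
      simp only [csize] at hsz
      obtain ⟨q1⟩ := ih _ (by omega) p rfl Ξ Ψ
      obtain ⟨q2⟩ := ih _ (by omega) q rfl Ξ 0
      have q1' : CProof ((B.imp D) ::ₘ (Γ' + Ξ)) (B ::ₘ (Δ' + Ψ)) :=
        pcast (by simp) (by simp) q1
      have q2' : CProof (D ::ₘ (Γ' + Ξ)) Θ' := pcast (by simp) (by simp) q2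
      exact ⟨pcast (by simp) (by rw [add_right_comm]) (CProof.impL q1' q2')⟩
  | impR p =>
      rename_i B D Δ'
      simp only [csize] at hsz
      obtain ⟨q⟩ := ih _ (by omega) p rfl Ξ Ψ
      have q' : CProof (B ::ₘ (Γ + Ξ)) (D ::ₘ (Δ' + Ψ)) := pcast (by simp) (by simp) q
      exact ⟨pcast rfl (by simp) (CProof.impR q')⟩
  | allL t p =>
      rename_i B Γ'
      simp only [csize] at hsz
      obtain ⟨q⟩ := ih _ (by omega) p rfl Ξ Ψ
      have q' : CProof ((B.inst t) ::ₘ (Fm.all B) ::ₘ (Γ' + Ξ)) (Δ + Ψ) :=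
        pcast (by simp) rfl q
      exact ⟨pcast (by simp) rfl (CProof.allL t q')⟩
  | exR t p =>
      rename_i B Δ'
      simp only [csize] at hsz
      obtain ⟨q⟩ := ih _ (by omega) p rfl Ξ Ψ
      have q' : CProof (Γ + Ξ) ((B.inst t) ::ₘ (Δ' + Ψ)) := pcast rfl (by simp) q
      exact ⟨pcast rfl (by simp) (CProof.exR t q')⟩
  | exL c hc p =>
      rename_i B Γ'
      simp only [csize] at hsz
      set d := pbnd p + msbnd ((Fm.ex B) ::ₘ (Γ' + Ξ)) + msbnd (Δ + Ψ) with hd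
      have hBc : ¬ B.constIn c := by
        have := hc.1 (Fm.ex B) (Multiset.mem_cons_self _ _)
        simpa [Fm.constIn] using this
      obtain ⟨q, hq⟩ := crename c d p (by omega)
      obtain ⟨q', hq'⟩ : Σ' w : CProof ((B.inst (Tm.const d)) ::ₘ Γ') Δ,
          w.csize = p.csize := by
        refine ⟨pcast ?_ ?_ q, by rw [csize_pcast]; exact hq⟩
        · rw [Multiset.map_cons, Fm.ren_inst c d B hBc (Tm.const c)]
          simp only [Tm.ren]
          rw [ms_ren_fresh (fun F hF => hc.1 F (Multiset.mem_cons_of_mem hF))]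
          simp
        · exact ms_ren_fresh hc.2
      obtain ⟨w⟩ := ih _ (by omega) q' hq' Ξ Ψ
      have w' : CProof ((B.inst (Tm.const d)) ::ₘ (Γ' + Ξ)) (Δ + Ψ) :=
        pcast (by simp) rfl w
      have hfresh : FreshSeq d ((Fm.ex B) ::ₘ (Γ' + Ξ)) (Δ + Ψ) :=
        ⟨fun F hF => msbnd_spec hF (by omega), fun F hF => msbnd_spec hF (by omega)⟩
      exact ⟨pcast (by simp) rfl (CProof.exL d hfresh w')⟩
  | allR c hc p =>
      rename_i B Δ'
      simp only [csize] at hsz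
      set d := pbnd p + msbnd (Γ + Ξ) + msbnd ((Fm.all B) ::ₘ (Δ' + Ψ)) with hd
      have hBc : ¬ B.constIn c := by
        have := hc.2 (Fm.all B) (Multiset.mem_cons_self _ _)
        simpa [Fm.constIn] using this
      obtain ⟨q, hq⟩ := crename c d p (by omega)
      obtain ⟨q', hq'⟩ : Σ' w : CProof Γ ((B.inst (Tm.const d)) ::ₘ Δ'),
          w.csize = p.csize := by
        refine ⟨pcast ?_ ?_ q, by rw [csize_pcast]; exact hq⟩
        · exact ms_ren_fresh hc.1
        · rw [Multiset.map_cons, Fm.ren_inst c d B hBc (Tm.const c)]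
          simp only [Tm.ren]
          rw [ms_ren_fresh (fun F hF => hc.2 F (Multiset.mem_cons_of_mem hF))]
          simp
      obtain ⟨w⟩ := ih _ (by omega) q' hq' Ξ Ψ
      have w' : CProof (Γ + Ξ) ((B.inst (Tm.const d)) ::ₘ (Δ' + Ψ)) :=
        pcast rfl (by simp) w
      have hfresh : FreshSeq d (Γ + Ξ) ((Fm.all B) ::ₘ (Δ' + Ψ)) :=
        ⟨fun F hF => msbnd_spec hF (by omega), fun F hF => msbnd_spec hF (by omega)⟩
      exact ⟨pcast rfl (by simp) (CProof.allR d hfresh w')⟩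

theorem weakToL {Γ₁ Γ₂ Δ : Multiset Fm} (p : CProof Γ₁ Δ) (h : Γ₁ ≤ Γ₂) :
    Nonempty (CProof Γ₂ Δ) := by
  obtain ⟨q⟩ := cweak _ p rfl (Γ₂ - Γ₁) 0
  exact ⟨CProof.pcast (by rw [add_comm]; exact tsub_add_cancel_of_le h) (add_zero Δ) q⟩

theorem weakToL' {Γ₁ Γ₂ Δ : Multiset Fm} (p : Nonempty (CProof Γ₁ Δ)) (h : Γ₁ ≤ Γ₂) :
    Nonempty (CProof Γ₂ Δ) := by
  obtain ⟨q⟩ := p; exact weakToL q h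

theorem fil_cons_eq (N : Fm) (S : Multiset Fm) :
    (N ::ₘ S).filter (· ≠ N) = S.filter (· ≠ N) :=
  Multiset.filter_cons_of_neg _ (by simp)

theorem fil_cons_ne {X N : Fm} (h : X ≠ N) (S : Multiset Fm) :
    (X ::ₘ S).filter (· ≠ N) = X ::ₘ S.filter (· ≠ N) :=
  Multiset.filter_cons_of_pos _ h

theorem fil_cons_le (X N : Fm) (S : Multiset Fm) :
    (X ::ₘ S).filter (· ≠ N) ≤ X ::ₘ S.filter (· ≠ N) := by
  by_cases h : X = N
  · rw [h, fil_cons_eq]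
    exact le_trans (le_refl _) (Multiset.le_cons_self _ _)
  · rw [fil_cons_ne h]

theorem bot_ne_imp (B : Fm) : Fm.bot ≠ B.imp Fm.bot := by simp

theorem atom_ne_imp {A B : Fm} (h : A.isAtom) : A ≠ B.imp Fm.bot := by
  cases A <;> simp [Fm.isAtom] at h ⊢

open CProof in
/-- Key lemma for the right-to-left direction: a hypothesis `B⊃⊥` can be
traded for `B` in the succedent. -/
theorem negElim (B : Fm) : ∀ (n : ℕ) {Γ Δ : Multiset Fm} (p : CProof Γ Δ), csize p = n →
    Nonempty (CProof (Γ.filter (· ≠ B.imp Fm.bot)) (B ::ₘ Δ)) := by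
  intro n
  induction n using Nat.strong_induction_on with
  | _ n ih =>
  intro Γ Δ p hsz
  cases p with
  | ax h =>
      refine ⟨CProof.ax ?_⟩
      rcases h with h | ⟨A, hA, h1, h2⟩
      · exact Or.inl (Multiset.mem_cons_of_mem h)
      · have hAN : A ≠ B.imp Fm.bot := by
          rcases hA with rfl | hA
          · exact bot_ne_imp B
          · exact atom_ne_imp hA
        exact Or.inr ⟨A, hA, Multiset.mem_filter.2 ⟨h1, hAN⟩, Multiset.mem_cons_of_mem h2⟩
  | contrL p =>
      rename_i X Γ'
      simp only [csize] at hsz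
      obtain ⟨q⟩ := ih _ (by omega) p rfl
      by_cases hX : X = B.imp Fm.bot
      · subst hX
        exact ⟨pcast (by rw [fil_cons_eq, fil_cons_eq]) rfl q⟩
      · have q' : CProof (X ::ₘ X ::ₘ Γ'.filter (· ≠ B.imp Fm.bot)) (B ::ₘ Δ) :=
          pcast (by rw [fil_cons_ne hX, fil_cons_ne hX]) rfl q
        exact ⟨pcast (by rw [fil_cons_ne hX]) rfl (CProof.contrL q')⟩
  | contrR p =>
      rename_i X Δ'
      simp only [csize] at hsz
      obtain ⟨q⟩ := ih _ (by omega) p rfl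
      have q' : CProof (Γ.filter (· ≠ B.imp Fm.bot)) (X ::ₘ X ::ₘ B ::ₘ Δ') :=
        pcast rfl (by rw [Multiset.cons_swap B X, Multiset.cons_swap B X]) q
      exact ⟨pcast rfl (Multiset.cons_swap X B Δ') (CProof.contrR q')⟩
  | botR p =>
      rename_i D Δ'
      simp only [csize] at hsz
      obtain ⟨q⟩ := ih _ (by omega) p rfl
      have q' : CProof (Γ.filter (· ≠ B.imp Fm.bot)) (Fm.bot ::ₘ B ::ₘ Δ') :=
        pcast rfl (Multiset.cons_swap B Fm.bot Δ') q
      exact ⟨pcast rfl (Multiset.cons_swap D B Δ') (CProof.botR (D := D) q')⟩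
  | andL p =>
      rename_i X Y Γ'
      simp only [csize] at hsz
      obtain ⟨q⟩ := ih _ (by omega) p rfl
      have hC : X.conj Y ≠ B.imp Fm.bot := by simp
      obtain ⟨q'⟩ := weakToL q (le_trans (fil_cons_le _ _ _)
        (Multiset.cons_le_cons X (le_trans (fil_cons_le _ _ _)
          (Multiset.cons_le_cons Y (le_of_eq (fil_cons_ne hC Γ'))))))
      exact ⟨pcast (fil_cons_ne hC Γ').symm rfl (CProof.andL q')⟩
  | andR p q =>
      rename_i X Y Δ'
      simp only [csize] at hsz
      obtain ⟨q1⟩ := ih _ (by omega) p rfl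
      obtain ⟨q2⟩ := ih _ (by omega) q rfl
      have q1' : CProof (Γ.filter (· ≠ B.imp Fm.bot)) (X ::ₘ B ::ₘ Δ') :=
        pcast rfl (Multiset.cons_swap B X Δ') q1
      have q2' : CProof (Γ.filter (· ≠ B.imp Fm.bot)) (Y ::ₘ B ::ₘ Δ') :=
        pcast rfl (Multiset.cons_swap B Y Δ') q2
      exact ⟨pcast rfl (Multiset.cons_swap _ B Δ') (CProof.andR q1' q2')⟩
  | orL p q =>
      rename_i X Y Γ'
      simp only [csize] at hsz
      obtain ⟨q1⟩ := ih _ (by omega) p rfl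
      obtain ⟨q2⟩ := ih _ (by omega) q rfl
      have hC : X.disj Y ≠ B.imp Fm.bot := by simp
      obtain ⟨q1'⟩ := weakToL q1 (fil_cons_le X _ Γ')
      obtain ⟨q2'⟩ := weakToL q2 (fil_cons_le Y _ Γ')
      exact ⟨pcast (fil_cons_ne hC Γ').symm rfl (CProof.orL q1' q2')⟩
  | orR1 p =>
      rename_i X Y Δ'
      simp only [csize] at hsz
      obtain ⟨q⟩ := ih _ (by omega) p rfl
      have q' : CProof (Γ.filter (· ≠ B.imp Fm.bot)) (X ::ₘ B ::ₘ Δ') :=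
        pcast rfl (Multiset.cons_swap B X Δ') q
      exact ⟨pcast rfl (Multiset.cons_swap _ B Δ') (CProof.orR1 (D := Y) q')⟩
  | orR2 p =>
      rename_i X Y Δ'
      simp only [csize] at hsz
      obtain ⟨q⟩ := ih _ (by omega) p rfl
      have q' : CProof (Γ.filter (· ≠ B.imp Fm.bot)) (Y ::ₘ B ::ₘ Δ') :=
        pcast rfl (Multiset.cons_swap B Y Δ') q
      exact ⟨pcast rfl (Multiset.cons_swap _ B Δ') (CProof.orR2 (B := X) q')⟩
  | impL p q =>
      rename_i X Y Γ' Δ' Θ'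
      simp only [csize] at hsz
      by_cases hXY : X.imp Y = B.imp Fm.bot
      · have hX : X = B := by injection hXY
        obtain ⟨q1⟩ := ih _ (by omega) p rfl
        have q1' : CProof (Γ'.filter (· ≠ B.imp Fm.bot)) (B ::ₘ B ::ₘ Δ') := by
          refine pcast ?_ ?_ q1
          · rw [hXY, fil_cons_eq]
          · rw [hX]
        have q1'' := CProof.contrR q1'
        obtain ⟨w⟩ := cweak _ q1'' rfl 0 Θ'
        refine ⟨pcast ?_ ?_ w⟩
        · rw [add_zero, hXY, fil_cons_eq]
        · rw [Multiset.cons_add]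
      · obtain ⟨q1⟩ := ih _ (by omega) p rfl
        obtain ⟨q2⟩ := ih _ (by omega) q rfl
        have q1' : CProof ((X.imp Y) ::ₘ Γ'.filter (· ≠ B.imp Fm.bot)) (X ::ₘ B ::ₘ Δ') :=
          pcast (fil_cons_ne hXY Γ') (Multiset.cons_swap B X Δ') q1
        obtain ⟨q2'⟩ := weakToL q2 (fil_cons_le Y _ Γ')
        have r := CProof.impL q1' (q := q2')
        have r' : CProof ((X.imp Y) ::ₘ Γ'.filter (· ≠ B.imp Fm.bot))
            (B ::ₘ B ::ₘ (Δ' + Θ')) := by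
          refine pcast rfl ?_ r
          rw [Multiset.cons_add, Multiset.add_cons, Multiset.cons_swap]
        exact ⟨pcast (fil_cons_ne hXY Γ').symm rfl (CProof.contrR r')⟩
  | impR p =>
      rename_i X Y Δ'
      simp only [csize] at hsz
      obtain ⟨q⟩ := ih _ (by omega) p rfl
      obtain ⟨q'⟩ := weakToL q (fil_cons_le X _ Γ)
      have q'' : CProof (X ::ₘ Γ.filter (· ≠ B.imp Fm.bot)) (Y ::ₘ B ::ₘ Δ') :=
        pcast rfl (Multiset.cons_swap B Y Δ') q'
      exact ⟨pcast rfl (Multiset.cons_swap _ B Δ') (CProof.impR q'')⟩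
  | allL t p =>
      rename_i X Γ'
      simp only [csize] at hsz
      obtain ⟨q⟩ := ih _ (by omega) p rfl
      have hC : Fm.all X ≠ B.imp Fm.bot := by simp
      obtain ⟨q'⟩ := weakToL q (le_trans (fil_cons_le _ _ _)
        (Multiset.cons_le_cons _ (le_of_eq (fil_cons_ne hC Γ'))))
      exact ⟨pcast (fil_cons_ne hC Γ').symm rfl (CProof.allL t q')⟩
  | exR t p =>
      rename_i X Δ'
      simp only [csize] at hsz
      obtain ⟨q⟩ := ih _ (by omega) p rfl
      have q' : CProof (Γ.filter (· ≠ B.imp Fm.bot)) ((X.inst t) ::ₘ B ::ₘ Δ') :=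
        pcast rfl (Multiset.cons_swap B _ Δ') q
      exact ⟨pcast rfl (Multiset.cons_swap _ B Δ') (CProof.exR t q')⟩
  | exL c hc p =>
      rename_i X Γ'
      simp only [csize] at hsz
      set d := pbnd p + msbnd ((Fm.ex X) ::ₘ Γ') + msbnd Δ + Fm.fbnd B with hd
      have hXc : ¬ X.constIn c := by
        have := hc.1 (Fm.ex X) (Multiset.mem_cons_self _ _)
        simpa [Fm.constIn] using this
      obtain ⟨q, hq⟩ := crename c d p (by omega)
      obtain ⟨q', hq'⟩ : Σ' w : CProof ((X.inst (Tm.const d)) ::ₘ Γ') Δ,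
          w.csize = p.csize := by
        refine ⟨pcast ?_ ?_ q, by rw [csize_pcast]; exact hq⟩
        · rw [Multiset.map_cons, Fm.ren_inst c d X hXc (Tm.const c)]
          simp only [Tm.ren]
          rw [ms_ren_fresh (fun F hF => hc.1 F (Multiset.mem_cons_of_mem hF))]
          simp
        · exact ms_ren_fresh hc.2
      obtain ⟨w⟩ := ih _ (by omega) q' hq'
      obtain ⟨w'⟩ := weakToL w (fil_cons_le _ _ Γ')
      have hfresh : FreshSeq d ((Fm.ex X) ::ₘ Γ'.filter (· ≠ B.imp Fm.bot)) (B ::ₘ Δ) := by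
        constructor
        · intro F hF
          rcases Multiset.mem_cons.1 hF with rfl | hF
          · exact msbnd_spec (Γ := (Fm.ex X) ::ₘ Γ') (Multiset.mem_cons_self _ _) (by omega)
          · exact msbnd_spec (Γ := (Fm.ex X) ::ₘ Γ')
              (Multiset.mem_cons_of_mem (Multiset.mem_of_mem_filter hF)) (by omega)
        · intro F hF
          rcases Multiset.mem_cons.1 hF with rfl | hF
          · exact Fm.fbnd_spec (by omega)
          · exact msbnd_spec hF (by omega)
      have hC : Fm.ex X ≠ B.imp Fm.bot := by simp
      exact ⟨pcast (fil_cons_ne hC Γ').symm rfl (CProof.exL d hfresh w')⟩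
  | allR c hc p =>
      rename_i X Δ'
      simp only [csize] at hsz
      set d := pbnd p + msbnd Γ + msbnd ((Fm.all X) ::ₘ Δ') + Fm.fbnd B with hd
      have hXc : ¬ X.constIn c := by
        have := hc.2 (Fm.all X) (Multiset.mem_cons_self _ _)
        simpa [Fm.constIn] using this
      obtain ⟨q, hq⟩ := crename c d p (by omega)
      obtain ⟨q', hq'⟩ : Σ' w : CProof Γ ((X.inst (Tm.const d)) ::ₘ Δ'),
          w.csize = p.csize := by
        refine ⟨pcast ?_ ?_ q, by rw [csize_pcast]; exact hq⟩
        · exact ms_ren_fresh hc.1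
        · rw [Multiset.map_cons, Fm.ren_inst c d X hXc (Tm.const c)]
          simp only [Tm.ren]
          rw [ms_ren_fresh (fun F hF => hc.2 F (Multiset.mem_cons_of_mem hF))]
          simp
      obtain ⟨w⟩ := ih _ (by omega) q' hq'
      have w' : CProof (Γ.filter (· ≠ B.imp Fm.bot)) ((X.inst (Tm.const d)) ::ₘ B ::ₘ Δ') :=
        pcast rfl (Multiset.cons_swap B _ Δ') w
      have hfresh : FreshSeq d (Γ.filter (· ≠ B.imp Fm.bot))
          ((Fm.all X) ::ₘ B ::ₘ Δ') := by
        constructor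
        · intro F hF
          exact msbnd_spec (Multiset.mem_of_mem_filter hF) (by omega)
        · intro F hF
          rcases Multiset.mem_cons.1 hF with rfl | hF
          · exact msbnd_spec (Γ := (Fm.all X) ::ₘ Δ') (Multiset.mem_cons_self _ _) (by omega)
          · rcases Multiset.mem_cons.1 hF with rfl | hF
            · exact Fm.fbnd_spec (by omega)
            · exact msbnd_spec (Γ := (Fm.all X) ::ₘ Δ')
                (Multiset.mem_cons_of_mem hF) (by omega)
      exact ⟨pcast rfl (Multiset.cons_swap _ B Δ') (CProof.allR d hfresh w')⟩

open CProof in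
theorem rtl_dir {Γ : Multiset Fm} {G : Fm} (h : IProv ((G.imp Fm.bot) ::ₘ Γ) G) :
    CProv Γ G := by
  obtain ⟨p, _⟩ := h
  obtain ⟨q⟩ := negElim G _ p rfl
  have q' : CProof (Γ.filter (· ≠ G.imp Fm.bot)) (G ::ₘ G ::ₘ 0) :=
    pcast (fil_cons_eq _ _) rfl q
  exact weakToL' ⟨CProof.contrR q'⟩ (Multiset.filter_le _ Γ)

open CProof in
/-- `⊥` on the left proves anything, intuitionistically. -/
theorem botElimI (Γ : Multiset Fm) (F : Fm) :
    ∃ p : CProof (Fm.bot ::ₘ Γ) ({F} : Multiset Fm), p.isI := by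
  have h : AxSeq (Fm.bot ::ₘ Γ) ({Fm.bot} : Multiset Fm) :=
    Or.inr ⟨Fm.bot, Or.inl rfl, Multiset.mem_cons_self _ _, Multiset.mem_singleton.2 rfl⟩
  exact ⟨CProof.botR (D := F) (CProof.ax h), by simp [isI]⟩

open CProof in
/-- Every I_G-proof yields an I-proof with the additional hypothesis `G⊃⊥`. -/
theorem stepA {G : Fm} : ∀ {Γ : Multiset Fm} {F : Fm} (q : IGProof G Γ F),
    IProv ((G.imp Fm.bot) ::ₘ Γ) F := by
  intro Γ F q
  induction q with
  | ax h =>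
      rename_i Γ' F'
      have h' : AxSeq ((G.imp Fm.bot) ::ₘ Γ') ({F'} : Multiset Fm) := by
        rcases h with h | ⟨A, hA, h1, h2⟩
        · exact Or.inl h
        · exact Or.inr ⟨A, hA, Multiset.mem_cons_of_mem h1, h2⟩
      exact ⟨CProof.ax h', by simp [isI]⟩
  | contrL p ih =>
      rename_i B Γ' F'
      obtain ⟨q, hq⟩ := ih
      obtain ⟨q1, hq1⟩ : ∃ w : CProof (B ::ₘ B ::ₘ (G.imp Fm.bot) ::ₘ Γ')
          ({F'} : Multiset Fm), isI _ _ w :=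
        ⟨pcast (by rw [Multiset.cons_swap (G.imp Fm.bot) B,
          Multiset.cons_swap (G.imp Fm.bot) B]) rfl q, by rw [isI_pcast]; exact hq⟩
      exact ⟨pcast (Multiset.cons_swap _ _ _) rfl (CProof.contrL q1),
        by rw [isI_pcast]; exact ⟨by simp, hq1⟩⟩
  | botR p ih =>
      rename_i Γ' F'
      obtain ⟨q, hq⟩ := ih
      exact ⟨CProof.botR (D := F') q, by exact ⟨by simp, hq⟩⟩
  | andL p ih =>
      rename_i B D Γ' F'
      obtain ⟨q, hq⟩ := ih
      obtain ⟨q1, hq1⟩ : ∃ w : CProof (B ::ₘ D ::ₘ (B.conj D) ::ₘ (G.imp Fm.bot) ::ₘ Γ')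
          ({F'} : Multiset Fm), isI _ _ w :=
        ⟨pcast (by rw [Multiset.cons_swap (G.imp Fm.bot) B,
          Multiset.cons_swap (G.imp Fm.bot) D,
          Multiset.cons_swap (G.imp Fm.bot) (B.conj D)]) rfl q,
          by rw [isI_pcast]; exact hq⟩
      exact ⟨pcast (Multiset.cons_swap _ _ _) rfl (CProof.andL q1),
        by rw [isI_pcast]; exact ⟨by simp, hq1⟩⟩
  | andR p q ihp ihq =>
      obtain ⟨q1, hq1⟩ := ihp
      obtain ⟨q2, hq2⟩ := ihq
      exact ⟨CProof.andR q1 q2, ⟨by simp, hq1, hq2⟩⟩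
  | orL p q ihp ihq =>
      rename_i B D Γ' F'
      obtain ⟨q1, hq1⟩ := ihp
      obtain ⟨q2, hq2⟩ := ihq
      obtain ⟨q1', hq1'⟩ : ∃ w : CProof (B ::ₘ (G.imp Fm.bot) ::ₘ Γ')
          ({F'} : Multiset Fm), isI _ _ w :=
        ⟨pcast (Multiset.cons_swap _ _ _) rfl q1, by rw [isI_pcast]; exact hq1⟩
      obtain ⟨q2', hq2'⟩ : ∃ w : CProof (D ::ₘ (G.imp Fm.bot) ::ₘ Γ')
          ({F'} : Multiset Fm), isI _ _ w :=
        ⟨pcast (Multiset.cons_swap _ _ _) rfl q2, by rw [isI_pcast]; exact hq2⟩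
      exact ⟨pcast (Multiset.cons_swap _ _ _) rfl (CProof.orL q1' q2'),
        by rw [isI_pcast]; exact ⟨by simp, hq1', hq2'⟩⟩
  | orR1 p ih =>
      obtain ⟨q, hq⟩ := ih
      exact ⟨CProof.orR1 q, ⟨by simp, hq⟩⟩
  | orR2 p ih =>
      obtain ⟨q, hq⟩ := ih
      exact ⟨CProof.orR2 q, ⟨by simp, hq⟩⟩
  | impL p q ihp ihq =>
      rename_i B D Γ' F'
      obtain ⟨q1, hq1⟩ := ihp
      obtain ⟨q2, hq2⟩ := ihq
      obtain ⟨q1', hq1'⟩ : ∃ w : CProof ((B.imp D) ::ₘ (G.imp Fm.bot) ::ₘ Γ')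
          (B ::ₘ (0 : Multiset Fm)), isI _ _ w :=
        ⟨pcast (Multiset.cons_swap _ _ _) rfl q1, by rw [isI_pcast]; exact hq1⟩
      obtain ⟨q2', hq2'⟩ : ∃ w : CProof (D ::ₘ (G.imp Fm.bot) ::ₘ Γ')
          ({F'} : Multiset Fm), isI _ _ w :=
        ⟨pcast (Multiset.cons_swap _ _ _) rfl q2, by rw [isI_pcast]; exact hq2⟩
      exact ⟨pcast (Multiset.cons_swap _ _ _) (by simp)
        (CProof.impL (Δ := 0) q1' q2'),
        by rw [isI_pcast]; exact ⟨by simp, hq1', hq2'⟩⟩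
  | impR p ih =>
      rename_i B D Γ'
      obtain ⟨q, hq⟩ := ih
      obtain ⟨q', hq'⟩ : ∃ w : CProof (B ::ₘ (G.imp Fm.bot) ::ₘ Γ')
          (D ::ₘ (0 : Multiset Fm)), isI _ _ w :=
        ⟨pcast (Multiset.cons_swap _ _ _) rfl q, by rw [isI_pcast]; exact hq⟩
      exact ⟨CProof.impR q', ⟨by simp, hq'⟩⟩
  | allL t p ih =>
      rename_i B Γ' F'
      obtain ⟨q, hq⟩ := ih
      obtain ⟨q1, hq1⟩ : ∃ w : CProof ((B.inst t) ::ₘ (Fm.all B) ::ₘ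
          (G.imp Fm.bot) ::ₘ Γ') ({F'} : Multiset Fm), isI _ _ w :=
        ⟨pcast (by rw [Multiset.cons_swap (G.imp Fm.bot) (B.inst t),
          Multiset.cons_swap (G.imp Fm.bot) (Fm.all B)]) rfl q,
          by rw [isI_pcast]; exact hq⟩
      exact ⟨pcast (Multiset.cons_swap _ _ _) rfl (CProof.allL t q1),
        by rw [isI_pcast]; exact ⟨by simp, hq1⟩⟩
  | exR t p ih =>
      obtain ⟨q, hq⟩ := ih
      exact ⟨CProof.exR t q, ⟨by simp, hq⟩⟩
  | exL c hc hG p ih =>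
      rename_i B Γ' F'
      obtain ⟨q, hq⟩ := ih
      obtain ⟨q1, hq1⟩ : ∃ w : CProof ((B.inst (Tm.const c)) ::ₘ (G.imp Fm.bot) ::ₘ Γ')
          ({F'} : Multiset Fm), isI _ _ w :=
        ⟨pcast (Multiset.cons_swap _ _ _) rfl q, by rw [isI_pcast]; exact hq⟩
      have hc' : FreshSeq c ((Fm.ex B) ::ₘ (G.imp Fm.bot) ::ₘ Γ') ({F'} : Multiset Fm) := by
        constructor
        · intro X hX
          rcases Multiset.mem_cons.1 hX with rfl | hX
          · exact hc.1 _ (Multiset.mem_cons_self _ _)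
          · rcases Multiset.mem_cons.1 hX with rfl | hX
            · simp [Fm.constIn, hG]
            · exact hc.1 _ (Multiset.mem_cons_of_mem hX)
        · exact hc.2
      exact ⟨pcast (Multiset.cons_swap _ _ _) rfl (CProof.exL c hc' q1),
        by rw [isI_pcast]; exact ⟨by simp, hq1⟩⟩
  | allR c hc hG p ih =>
      rename_i B Γ'
      obtain ⟨q, hq⟩ := ih
      have hc' : FreshSeq c ((G.imp Fm.bot) ::ₘ Γ') ({Fm.all B} : Multiset Fm) := by
        constructor
        · intro X hX
          rcases Multiset.mem_cons.1 hX with rfl | hX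
          · simp [Fm.constIn, hG]
          · exact hc.1 _ hX
        · exact hc.2
      exact ⟨CProof.allR c hc' q, ⟨by simp, hq⟩⟩
  | orLG p q ihp ihq =>
      rename_i B D Γ' F'
      obtain ⟨q1, hq1⟩ := ihp
      obtain ⟨q2, hq2⟩ := ihq
      obtain ⟨q1', hq1'⟩ : ∃ w : CProof (B ::ₘ (G.imp Fm.bot) ::ₘ Γ')
          ({F'} : Multiset Fm), isI _ _ w :=
        ⟨pcast (Multiset.cons_swap _ _ _) rfl q1, by rw [isI_pcast]; exact hq1⟩
      obtain ⟨bt, hbt⟩ := botElimI (D ::ₘ Γ') F'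
      obtain ⟨r', hr'⟩ : ∃ w : CProof (D ::ₘ (G.imp Fm.bot) ::ₘ Γ')
          ({F'} : Multiset Fm), isI _ _ w :=
        ⟨pcast (Multiset.cons_swap _ _ _) (by simp)
          (CProof.impL (Δ := 0) (q2 : CProof ((G.imp Fm.bot) ::ₘ D ::ₘ Γ')
            (G ::ₘ (0 : Multiset Fm))) bt),
          by rw [isI_pcast]; exact ⟨by simp, hq2, hbt⟩⟩
      exact ⟨pcast (Multiset.cons_swap _ _ _) rfl (CProof.orL q1' r'),
        by rw [isI_pcast]; exact ⟨by simp, hq1', hr'⟩⟩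
  | resG p ih =>
      rename_i Γ' F'
      obtain ⟨q, hq⟩ := ih
      obtain ⟨bt, hbt⟩ := botElimI Γ' F'
      exact ⟨pcast rfl (by simp) (CProof.impL (Δ := 0)
        (q : CProof ((G.imp Fm.bot) ::ₘ Γ') (G ::ₘ (0 : Multiset Fm))) bt),
        by rw [isI_pcast]; exact ⟨by simp, hq, hbt⟩⟩

/-- Nonempty IG-provability. -/
def IGP (G : Fm) (Ω : Multiset Fm) (F : Fm) : Prop := Nonempty (IGProof G Ω F)

/-- A weakening-closed family of IG-proofs. -/
def PFam (G : Fm) (Ω : Multiset Fm) (F : Fm) : Prop := ∀ Ω', Ω ≤ Ω' → IGP G Ω' F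

/-- A continuation turning (families of) proofs of `F` into proofs of `G`. -/
def KCont (G : Fm) (Ω : Multiset Fm) (F : Fm) : Prop :=
  ∀ Ω', Ω ≤ Ω' → PFam G Ω' F → IGP G Ω' G

theorem KCont.mono {G F : Fm} {Ω Ω₂ : Multiset Fm} (k : KCont G Ω F) (h : Ω ≤ Ω₂) :
    KCont G Ω₂ F := fun Ω' h' pf => k Ω' (le_trans h h') pf

def igcast {G F : Fm} {Γ Γ' : Multiset Fm} (h : Γ = Γ') (p : IGProof G Γ F) :
    IGProof G Γ' F := h ▸ p

theorem dconj {a b : Fm} (h : DFm (a.conj b)) : DFm a ∧ DFm b := by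
  cases h with | conj h1 h2 => exact ⟨h1, h2⟩
theorem ddisj {a b : Fm} (h : DFm (a.disj b)) : DFm a ∧ DFm b := by
  cases h with | disj h1 h2 => exact ⟨h1, h2⟩
theorem dimp {a b : Fm} (h : DFm (a.imp b)) : GFm a ∧ DFm b := by
  cases h with | imp h1 h2 => exact ⟨h1, h2⟩
theorem gconj {a b : Fm} (h : GFm (a.conj b)) : GFm a ∧ GFm b := by
  cases h with | conj h1 h2 => exact ⟨h1, h2⟩
theorem gdisj {a b : Fm} (h : GFm (a.disj b)) : GFm a ∧ GFm b := by
  cases h with | disj h1 h2 => exact ⟨h1, h2⟩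
theorem gimp {a b : Fm} (h : GFm (a.imp b)) : DFm a ∧ GFm b := by
  cases h with | imp h1 h2 => exact ⟨h1, h2⟩

open CProof in
/-- Main lemma: a classical proof of a sequent of D-formulas ⊢ G-formulas
yields an IG-proof of `G` from any extension of the antecedent, given
continuations for the succedent formulas. -/
theorem mainLem (G : Fm) : ∀ (n : ℕ) {Γ Δ : Multiset Fm} (p : CProof Γ Δ),
    csize p = n → (∀ X ∈ Γ, DFm X) → (∀ F ∈ Δ, GFm F) →
    ∀ Ω, Γ ≤ Ω → (∀ F ∈ Δ, KCont G Ω F) → IGP G Ω G := by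
  intro n
  induction n using Nat.strong_induction_on with
  | _ n ih =>
  intro Γ Δ p hsz hΓ hΔ Ω hΩ k
  cases p with
  | ax h =>
      rcases h with h | ⟨A, hA, h1, h2⟩
      · exact k Fm.top h Ω le_rfl (fun Ω'' _ =>
          ⟨IGProof.ax (Or.inl (Multiset.mem_singleton.2 rfl))⟩)
      · exact k A h2 Ω le_rfl (fun Ω'' h'' =>
          ⟨IGProof.ax (Or.inr ⟨A, hA, Multiset.mem_of_le (le_trans hΩ h'') h1,
            Multiset.mem_singleton.2 rfl⟩)⟩)
  | contrL p =>
      rename_i B Γ'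
      simp only [csize] at hsz
      have hB : B ∈ Ω := Multiset.mem_of_le hΩ (Multiset.mem_cons_self _ _)
      obtain ⟨w⟩ := ih _ (by omega) p rfl
        (fun X hX => by
          rcases Multiset.mem_cons.1 hX with rfl | hX
          · exact hΓ X (Multiset.mem_cons_self _ _)
          · exact hΓ X hX)
        hΔ (B ::ₘ Ω) (Multiset.cons_le_cons B hΩ)
        (fun F hF => (k F hF).mono (Multiset.le_cons_self Ω B))
      refine ⟨igcast (Multiset.cons_erase hB) (IGProof.contrL
        (igcast ?_ w))⟩
      rw [Multiset.cons_erase hB]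
  | contrR p =>
      rename_i B Δ'
      simp only [csize] at hsz
      refine ih _ (by omega) p rfl hΓ
        (fun F hF => by
          rcases Multiset.mem_cons.1 hF with rfl | hF
          · exact hΔ F (Multiset.mem_cons_self _ _)
          · exact hΔ F hF)
        Ω hΩ (fun F hF => by
          rcases Multiset.mem_cons.1 hF with rfl | hF
          · exact k F (Multiset.mem_cons_self _ _)
          · exact k F hF)
  | botR p =>
      rename_i D Δ'
      simp only [csize] at hsz
      refine ih _ (by omega) p rfl hΓ
        (fun F hF => by
          rcases Multiset.mem_cons.1 hF with rfl | hF
          · exact GFm.bot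
          · exact hΔ F (Multiset.mem_cons_of_mem hF))
        Ω hΩ (fun F hF => by
          rcases Multiset.mem_cons.1 hF with rfl | hF
          · exact fun Ω' _ pf => (pf Ω' le_rfl).elim (fun w => ⟨IGProof.botR w⟩)
          · exact k F (Multiset.mem_cons_of_mem hF))
  | andL p =>
      rename_i B D Γ'
      simp only [csize] at hsz
      have hC : B.conj D ∈ Ω := Multiset.mem_of_le hΩ (Multiset.mem_cons_self _ _)
      have hCd := dconj (hΓ _ (Multiset.mem_cons_self _ _))
      obtain ⟨w⟩ := ih _ (by omega) p rfl
        (fun X hX => by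
          rcases Multiset.mem_cons.1 hX with rfl | hX
          · exact hCd.1
          · rcases Multiset.mem_cons.1 hX with rfl | hX
            · exact hCd.2
            · exact hΓ X hX)
        hΔ (B ::ₘ D ::ₘ Ω)
        (by
          have h1 : B ::ₘ D ::ₘ (B.conj D) ::ₘ Γ' ≤ B ::ₘ D ::ₘ Ω :=
            Multiset.cons_le_cons B (Multiset.cons_le_cons D hΩ)
          exact h1)
        (fun F hF => (k F hF).mono
          (le_trans (Multiset.le_cons_self Ω D) (Multiset.le_cons_self _ B)))
      refine ⟨igcast (Multiset.cons_erase hC) (IGProof.andL (igcast ?_ w))⟩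
      rw [Multiset.cons_erase hC]
  | andR p q =>
      rename_i B D Δ'
      simp only [csize] at hsz
      have hCg := gconj (hΔ _ (Multiset.mem_cons_self _ _))
      have hΔ1 : ∀ F ∈ B ::ₘ Δ', GFm F := fun F hF => by
        rcases Multiset.mem_cons.1 hF with rfl | hF
        · exact hCg.1
        · exact hΔ F (Multiset.mem_cons_of_mem hF)
      have hΔ2 : ∀ F ∈ D ::ₘ Δ', GFm F := fun F hF => by
        rcases Multiset.mem_cons.1 hF with rfl | hF
        · exact hCg.2
        · exact hΔ F (Multiset.mem_cons_of_mem hF)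
      refine ih _ (by omega) p rfl hΓ hΔ1 Ω hΩ (fun F hF => ?_)
      rcases Multiset.mem_cons.1 hF with rfl | hF
      · -- continuation for B
        intro Ω' h' famB
        refine ih _ (by omega) q rfl hΓ hΔ2 Ω' (le_trans hΩ h') (fun F2 hF2 => ?_)
        rcases Multiset.mem_cons.1 hF2 with rfl | hF2
        · -- continuation for D
          intro Ω'' h'' famD
          refine k (F.conj F2) (Multiset.mem_cons_self _ _) Ω'' (le_trans h' h'')
            (fun Ω₃ h₃ => ?_)
          obtain ⟨wb⟩ := famB Ω₃ (le_trans h'' h₃)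
          obtain ⟨wd⟩ := famD Ω₃ h₃
          exact ⟨IGProof.andR wb wd⟩
        · exact (k F2 (Multiset.mem_cons_of_mem hF2)).mono h'
      · exact k F (Multiset.mem_cons_of_mem hF)
  | orL p q =>
      rename_i B D Γ'
      simp only [csize] at hsz
      have hC : B.disj D ∈ Ω := Multiset.mem_of_le hΩ (Multiset.mem_cons_self _ _)
      have hCd := ddisj (hΓ _ (Multiset.mem_cons_self _ _))
      have hΓ' : ∀ X ∈ Γ', DFm X := fun X hX => hΓ X (Multiset.mem_cons_of_mem hX)
      obtain ⟨w1⟩ := ih _ (by omega) p rfl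
        (fun X hX => by
          rcases Multiset.mem_cons.1 hX with rfl | hX
          · exact hCd.1
          · exact hΓ' X hX)
        hΔ (B ::ₘ Ω)
        (Multiset.cons_le_cons B (le_trans (Multiset.le_cons_self Γ' _) hΩ))
        (fun F hF => (k F hF).mono (Multiset.le_cons_self Ω B))
      obtain ⟨w2⟩ := ih _ (by omega) q rfl
        (fun X hX => by
          rcases Multiset.mem_cons.1 hX with rfl | hX
          · exact hCd.2
          · exact hΓ' X hX)
        hΔ (D ::ₘ Ω)
        (Multiset.cons_le_cons D (le_trans (Multiset.le_cons_self Γ' _) hΩ))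
        (fun F hF => (k F hF).mono (Multiset.le_cons_self Ω D))
      refine ⟨igcast (Multiset.cons_erase hC) (IGProof.contrL
        (igcast ?_ (IGProof.orL w1 w2)))⟩
      rw [Multiset.cons_erase hC]
  | orR1 p =>
      rename_i B D Δ'
      simp only [csize] at hsz
      have hCg := gdisj (hΔ _ (Multiset.mem_cons_self _ _))
      refine ih _ (by omega) p rfl hΓ
        (fun F hF => by
          rcases Multiset.mem_cons.1 hF with rfl | hF
          · exact hCg.1
          · exact hΔ F (Multiset.mem_cons_of_mem hF))
        Ω hΩ (fun F hF => ?_)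
      rcases Multiset.mem_cons.1 hF with rfl | hF
      · exact fun Ω' h' pf => k (F.disj D) (Multiset.mem_cons_self _ _) Ω' h'
          (fun Ω'' h'' => (pf Ω'' h'').elim (fun w => ⟨IGProof.orR1 w⟩))
      · exact k F (Multiset.mem_cons_of_mem hF)
  | orR2 p =>
      rename_i B D Δ'
      simp only [csize] at hsz
      have hCg := gdisj (hΔ _ (Multiset.mem_cons_self _ _))
      refine ih _ (by omega) p rfl hΓ
        (fun F hF => by
          rcases Multiset.mem_cons.1 hF with rfl | hF
          · exact hCg.2
          · exact hΔ F (Multiset.mem_cons_of_mem hF))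
        Ω hΩ (fun F hF => ?_)
      rcases Multiset.mem_cons.1 hF with rfl | hF
      · exact fun Ω' h' pf => k (B.disj F) (Multiset.mem_cons_self _ _) Ω' h'
          (fun Ω'' h'' => (pf Ω'' h'').elim (fun w => ⟨IGProof.orR2 w⟩))
      · exact k F (Multiset.mem_cons_of_mem hF)
  | impL p q =>
      rename_i B D Γ' Δ' Θ'
      simp only [csize] at hsz
      have hCd := dimp (hΓ _ (Multiset.mem_cons_self _ _))
      have hΓ' : ∀ X ∈ Γ', DFm X := fun X hX => hΓ X (Multiset.mem_cons_of_mem hX)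
      refine ih _ (by omega) p rfl hΓ
        (fun F hF => by
          rcases Multiset.mem_cons.1 hF with rfl | hF
          · exact hCd.1
          · exact hΔ F (Multiset.mem_add.2 (Or.inl hF)))
        Ω hΩ (fun F hF => ?_)
      rcases Multiset.mem_cons.1 hF with rfl | hF
      · -- continuation for B : use ⊃-L
        intro Ω' h' famB
        have hC' : F.imp D ∈ Ω' :=
          Multiset.mem_of_le (le_trans hΩ h') (Multiset.mem_cons_self _ _)
        obtain ⟨pb⟩ := famB ((F.imp D) ::ₘ Ω') (Multiset.le_cons_self _ _)
        obtain ⟨w2⟩ := ih _ (by omega) q rfl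
          (fun X hX => by
            rcases Multiset.mem_cons.1 hX with rfl | hX
            · exact hCd.2
            · exact hΓ' X hX)
          (fun F2 hF2 => hΔ F2 (Multiset.mem_add.2 (Or.inr hF2)))
          (D ::ₘ Ω')
          (Multiset.cons_le_cons D (le_trans (le_trans
            (Multiset.le_cons_self Γ' _) hΩ) h'))
          (fun F2 hF2 => (k F2 (Multiset.mem_add.2 (Or.inr hF2))).mono
            (le_trans h' (Multiset.le_cons_self Ω' D)))
        refine ⟨igcast (Multiset.cons_erase hC') (IGProof.contrL
          (igcast ?_ (IGProof.impL pb w2)))⟩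
        rw [Multiset.cons_erase hC']
      · exact k F (Multiset.mem_add.2 (Or.inl hF))
  | impR p =>
      rename_i B D Δ'
      simp only [csize] at hsz
      have hCg := gimp (hΔ _ (Multiset.mem_cons_self _ _))
      refine k (B.imp D) (Multiset.mem_cons_self _ _) Ω le_rfl (fun Ω₃ h₃ => ?_)
      have res : IGP G (B ::ₘ Ω₃) G := by
        refine ih _ (by omega) p rfl
          (fun X hX => by
            rcases Multiset.mem_cons.1 hX with rfl | hX
            · exact hCg.1
            · exact hΓ X hX)
          (fun F hF => by
            rcases Multiset.mem_cons.1 hF with rfl | hF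
            · exact hCg.2
            · exact hΔ F (Multiset.mem_cons_of_mem hF))
          (B ::ₘ Ω₃) (Multiset.cons_le_cons B (le_trans hΩ h₃))
          (fun F hF => ?_)
        rcases Multiset.mem_cons.1 hF with rfl | hF
        · -- continuation for D : close off with ⊃-R
          intro Ω'' h'' famD
          refine k (B.imp F) (Multiset.mem_cons_self _ _) Ω''
            (le_trans h₃ (le_trans (Multiset.le_cons_self Ω₃ B) h'')) (fun Ω₄ h₄ => ?_)
          obtain ⟨wD⟩ := famD (B ::ₘ Ω₄)
            (le_trans h₄ (Multiset.le_cons_self Ω₄ B))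
          exact ⟨IGProof.impR wD⟩
        · exact (k F (Multiset.mem_cons_of_mem hF)).mono
            (le_trans h₃ (Multiset.le_cons_self Ω₃ B))
      obtain ⟨w⟩ := res
      exact ⟨IGProof.impR (IGProof.resG w)⟩
  | allL t p =>
      rename_i B Γ'
      simp only [csize] at hsz
      have hC : Fm.all B ∈ Ω := Multiset.mem_of_le hΩ (Multiset.mem_cons_self _ _)
      have hBall := hΓ _ (Multiset.mem_cons_self (Fm.all B) Γ')
      obtain ⟨w⟩ := ih _ (by omega) p rfl
        (fun X hX => by
          rcases Multiset.mem_cons.1 hX with rfl | hX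
          · exact DFm_inst_all hBall t
          · rcases Multiset.mem_cons.1 hX with rfl | hX
            · exact hBall
            · exact hΓ X (Multiset.mem_cons_of_mem hX))
        hΔ ((B.inst t) ::ₘ Ω)
        (Multiset.cons_le_cons _ hΩ)
        (fun F hF => (k F hF).mono (Multiset.le_cons_self Ω _))
      refine ⟨igcast (Multiset.cons_erase hC) (IGProof.allL t (igcast ?_ w))⟩
      rw [Multiset.cons_erase hC]
  | exR t p =>
      rename_i B Δ'
      simp only [csize] at hsz
      have hBex := hΔ _ (Multiset.mem_cons_self (Fm.ex B) Δ')
      refine ih _ (by omega) p rfl hΓ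
        (fun F hF => by
          rcases Multiset.mem_cons.1 hF with rfl | hF
          · exact GFm_inst hBex t
          · exact hΔ F (Multiset.mem_cons_of_mem hF))
        Ω hΩ (fun F hF => ?_)
      rcases Multiset.mem_cons.1 hF with rfl | hF
      · exact fun Ω' h' pf => k (Fm.ex B) (Multiset.mem_cons_self _ _) Ω' h'
          (fun Ω'' h'' => (pf Ω'' h'').elim (fun w => ⟨IGProof.exR t w⟩))
      · exact k F (Multiset.mem_cons_of_mem hF)
  | exL c hc p =>
      rename_i B Γ'
      simp only [csize] at hsz
      set d := pbnd p + msbnd ((Fm.ex B) ::ₘ Γ') + msbnd Δ + msbnd Ω + Fm.fbnd G with hd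
      have hBc : ¬ B.constIn c := by
        have := hc.1 (Fm.ex B) (Multiset.mem_cons_self _ _)
        simpa [Fm.constIn] using this
      obtain ⟨q, hq⟩ := crename c d p (by omega)
      obtain ⟨q', hq'⟩ : Σ' w : CProof ((B.inst (Tm.const d)) ::ₘ Γ') Δ,
          w.csize = p.csize := by
        refine ⟨pcast ?_ ?_ q, by rw [csize_pcast]; exact hq⟩
        · rw [Multiset.map_cons, Fm.ren_inst c d B hBc (Tm.const c)]
          simp only [Tm.ren]
          rw [ms_ren_fresh (fun F hF => hc.1 F (Multiset.mem_cons_of_mem hF))]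
          simp
        · exact ms_ren_fresh hc.2
      have hBex := hΓ _ (Multiset.mem_cons_self (Fm.ex B) Γ')
      have hC : Fm.ex B ∈ Ω := Multiset.mem_of_le hΩ (Multiset.mem_cons_self _ _)
      obtain ⟨w⟩ := ih _ (by omega) q' hq'
        (fun X hX => by
          rcases Multiset.mem_cons.1 hX with rfl | hX
          · exact DFm_inst_ex hBex (Tm.const d)
          · exact hΓ X (Multiset.mem_cons_of_mem hX))
        hΔ ((B.inst (Tm.const d)) ::ₘ Ω)
        (Multiset.cons_le_cons _ (le_trans (Multiset.le_cons_self Γ' _) hΩ))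
        (fun F hF => (k F hF).mono (Multiset.le_cons_self Ω _))
      have hfresh : FreshSeq d ((Fm.ex B) ::ₘ Ω) ({G} : Multiset Fm) := by
        constructor
        · intro F hF
          rcases Multiset.mem_cons.1 hF with rfl | hF
          · exact msbnd_spec (Γ := (Fm.ex B) ::ₘ Γ') (Multiset.mem_cons_self _ _)
              (by omega)
          · exact msbnd_spec (Γ := Ω) hF (by omega)
        · intro F hF
          rw [Multiset.mem_singleton.1 hF]
          exact Fm.fbnd_spec (by omega)
      have hGd : ¬ G.constIn d := Fm.fbnd_spec (by omega)
      refine ⟨igcast (Multiset.cons_erase hC) (IGProof.contrL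
        (igcast ?_ (IGProof.exL d hfresh hGd w)))⟩
      rw [Multiset.cons_erase hC]
  | allR c hc p =>
      exact absurd (hΔ _ (Multiset.mem_cons_self _ _)) (fun h => by cases h)


/-- Theorem `equiv`: for any collection `Γ` of D-formulas
and any G-formula `G`, `Γ ⊢_C G` if and only if `G⊃⊥, Γ ⊢_I G`. -/
theorem statement_8 (Γ : Multiset Fm) (G : Fm) (hΓ : ∀ X ∈ Γ, DFm X) (hG : GFm G) :
    CProv Γ G ↔ IProv ((G.imp Fm.bot) ::ₘ Γ) G := by
  constructor
  · intro h
    obtain ⟨p⟩ := h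
    have kG : ∀ F ∈ ({G} : Multiset Fm), KCont G Γ F := by
      intro F hF
      rw [Multiset.mem_singleton.1 hF]
      exact fun Ω' _ pf => pf Ω' le_rfl
    obtain ⟨w⟩ := mainLem G _ p rfl hΓ
      (fun F hF => by rw [Multiset.mem_singleton.1 hF]; exact hG) Γ le_rfl kG
    exact stepA w
  · exact rtl_dir
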